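/- arXiv:2302.02600 — 11 statements merged into one kernel-verified Lean document; each statement's English description precedes it below -/
import Mathlib

section
/- There exists exactly one solution (u,p) ∈ K × Q of the continuous Biot contact problem; that is, there is exactly one pair (u,p) with u ∈ K such that ⟨u, v−u⟩_H − ⟨p, B(v−u)⟩_Q ≥ ⟨f_e, v−u⟩_H for all v ∈ K and −⟨Bu, q⟩_Q − ⟨p, q⟩_Q = ⟨f_f, q⟩_Q for all q ∈ Q. -/
/-!
Eliminating the pressure through the second equation, `p = -B u - f_f`, turns the problem into
the variational inequality `⟪u + B†(B u) - g, v - u⟫ ≥ 0` on `K` with `g = f_e - B† f_f`.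
The operator `I + B†B` is strongly monotone, which gives uniqueness. Since `‖B‖ ≤ 1`, the map
`x ↦ x - ½ (x + B†(B x) - g) = ½ (x - B†(B x) + g)` is a `½`-contraction, so its composite with
the (nonexpansive) metric projection onto `K` has a fixed point, which solves the inequality.
-/

open scoped RealInnerProductSpace NNReal

section VariationalInequality

variable {E : Type*} [NormedAddCommGroup E] [InnerProductSpace ℝ E] {K : Set E}

theorem exists_mem_forall_inner_sub_nonpos (hK_ne : K.Nonempty) (hK : IsComplete K)
    (hK_cv : Convex ℝ K) (x : E) : ∃ y ∈ K, ∀ w ∈ K, ⟪x - y, w - y⟫ ≤ 0 := by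
  obtain ⟨y, hy, hmin⟩ := exists_norm_eq_iInf_of_complete_convex hK_ne hK hK_cv x
  exact ⟨y, hy, (norm_eq_iInf_iff_real_inner_le_zero hK_cv hy).1 hmin⟩

theorem norm_sub_le_of_forall_inner_sub_nonpos {x x' y y' : E} (hy : y ∈ K) (hy' : y' ∈ K)
    (hxy : ∀ w ∈ K, ⟪x - y, w - y⟫ ≤ 0) (hxy' : ∀ w ∈ K, ⟪x' - y', w - y'⟫ ≤ 0) :
    ‖y - y'‖ ≤ ‖x - x'‖ := by
  have h₁ := hxy y' hy'
  have h₂ := hxy' y hy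
  have hsq : ‖y - y'‖ ^ 2 ≤ ⟪x - x', y - y'⟫ := by
    have hexp : ⟪x - x', y - y'⟫ - ‖y - y'‖ ^ 2 = -⟪x - y, y' - y⟫ - ⟪x' - y', y - y'⟫ := by
      rw [← real_inner_self_eq_norm_sq]
      simp only [inner_sub_left, inner_sub_right]
      ring
    linarith
  have hcs : ⟪x - x', y - y'⟫ ≤ ‖x - x'‖ * ‖y - y'‖ := real_inner_le_norm _ _
  nlinarith [norm_nonneg (y - y'), norm_nonneg (x - x')]

theorem exists_forall_inner_nonneg_of_contracting [CompleteSpace E] (hK_ne : K.Nonempty)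
    (hK_cl : IsClosed K) (hK_cv : Convex ℝ K) {F : E → E} {t : ℝ} {k : ℝ≥0} (ht : 0 < t)
    (hk : k < 1) (hF : LipschitzWith k fun x => x - t • F x) :
    ∃ u ∈ K, ∀ v ∈ K, 0 ≤ ⟪F u, v - u⟫ := by
  have hK := hK_cl.isComplete
  choose P hPK hP using exists_mem_forall_inner_sub_nonpos hK_ne hK hK_cv
  have : Nonempty K := hK_ne.to_subtype
  have : CompleteSpace K := hK.completeSpace_coe
  let φ : K → K := fun w => ⟨P (w - t • F w), hPK _⟩
  have hφ : ContractingWith k φ := by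
    refine ⟨hk, LipschitzWith.of_dist_le_mul fun x y => ?_⟩
    calc dist (φ x) (φ y) ≤ dist ((x : E) - t • F x) (y - t • F y) := by
          simp only [Subtype.dist_eq, dist_eq_norm]
          exact norm_sub_le_of_forall_inner_sub_nonpos (hPK _) (hPK _) (hP _) (hP _)
      _ ≤ k * dist x y := hF.dist_le_mul _ _
  obtain ⟨u, hu, -⟩ := hφ.exists_fixedPoint (Classical.arbitrary K) (edist_ne_top _ _)
  have hfix : P (u - t • F u) = u := congrArg Subtype.val hu
  refine ⟨u, u.2, fun v hv => ?_⟩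
  have h := hP (u - t • F u) v hv
  rw [hfix, sub_sub_cancel_left, inner_neg_left, real_inner_smul_left] at h
  nlinarith

theorem eq_of_inner_nonneg_of_strictMonotone {F : E → E}
    (hF : ∀ x y, x ≠ y → 0 < ⟪F x - F y, x - y⟫) {u u' : E}
    (hu : 0 ≤ ⟪F u, u' - u⟫) (hu' : 0 ≤ ⟪F u', u - u'⟫) : u = u' := by
  by_contra hne
  have h := hF u u' hne
  simp only [inner_sub_left, inner_sub_right] at h hu hu'
  linarith

end VariationalInequality

section AdjointComp

variable {H Q : Type*} [NormedAddCommGroup H] [InnerProductSpace ℝ H]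
  [NormedAddCommGroup Q] [InnerProductSpace ℝ Q]

theorem biot_pressure_iff (B : H →L[ℝ] Q) (u : H) (p f_f : Q) :
    (∀ q : Q, -⟪B u, q⟫ - ⟪p, q⟫ = ⟪f_f, q⟫) ↔ p = -B u - f_f := by
  constructor
  · intro h
    refine ext_inner_right ℝ fun q => ?_
    rw [inner_sub_left, inner_neg_left]
    linarith [h q]
  · rintro rfl q
    rw [inner_sub_left, inner_neg_left]
    ring

variable [CompleteSpace H] [CompleteSpace Q]

theorem norm_sub_adjoint_apply_apply_le (B : H →L[ℝ] Q) (hB : ‖B‖ ≤ 1) (d : H) :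
    ‖d - B.adjoint (B d)‖ ≤ ‖d‖ := by
  have hBd : ‖B.adjoint (B d)‖ ≤ ‖B d‖ :=
    calc ‖B.adjoint (B d)‖ ≤ ‖B.adjoint‖ * ‖B d‖ := B.adjoint.le_opNorm _
      _ ≤ ‖B d‖ := by
        rw [LinearIsometryEquiv.norm_map]
        exact mul_le_of_le_one_left (norm_nonneg _) hB
  have hexp : ‖d - B.adjoint (B d)‖ ^ 2 = ‖d‖ ^ 2 - 2 * ‖B d‖ ^ 2 + ‖B.adjoint (B d)‖ ^ 2 := by
    rw [norm_sub_sq_real, ContinuousLinearMap.adjoint_inner_right, real_inner_self_eq_norm_sq]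
  nlinarith [norm_nonneg (d - B.adjoint (B d)), norm_nonneg d, norm_nonneg (B.adjoint (B d))]

theorem lipschitzWith_sub_half_smul_add_adjoint (B : H →L[ℝ] Q) (hB : ‖B‖ ≤ 1) (g : H) :
    LipschitzWith 2⁻¹ fun x => x - (2⁻¹ : ℝ) • (x + B.adjoint (B x) - g) := by
  refine LipschitzWith.of_dist_le_mul fun x y => ?_
  have hdiff : x - (2⁻¹ : ℝ) • (x + B.adjoint (B x) - g)
      - (y - (2⁻¹ : ℝ) • (y + B.adjoint (B y) - g))
      = (2⁻¹ : ℝ) • ((x - y) - B.adjoint (B (x - y))) := by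
    simp only [map_sub]
    module
  rw [dist_eq_norm, dist_eq_norm, hdiff, norm_smul, NNReal.coe_inv, NNReal.coe_ofNat,
    Real.norm_of_nonneg (by norm_num)]
  exact mul_le_mul_of_nonneg_left (norm_sub_adjoint_apply_apply_le B hB _) (by norm_num)

theorem inner_add_adjoint_apply_sub_pos (B : H →L[ℝ] Q) (g : H) {x y : H} (hxy : x ≠ y) :
    0 < ⟪(x + B.adjoint (B x) - g) - (y + B.adjoint (B y) - g), x - y⟫ := by
  have h : (x + B.adjoint (B x) - g) - (y + B.adjoint (B y) - g)
      = (x - y) + B.adjoint (B (x - y)) := by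
    simp only [map_sub]
    abel
  rw [h, inner_add_left, ContinuousLinearMap.adjoint_inner_left, real_inner_self_eq_norm_sq,
    real_inner_self_eq_norm_sq]
  have : 0 < ‖x - y‖ := norm_pos_iff.2 (sub_ne_zero.2 hxy)
  positivity

theorem biot_displacement_iff (B : H →L[ℝ] Q) (f_e u v : H) (f_f : Q) :
    ⟪u, v - u⟫ - ⟪-B u - f_f, B (v - u)⟫ ≥ ⟪f_e, v - u⟫ ↔
      0 ≤ ⟪u + B.adjoint (B u) - (f_e - B.adjoint f_f), v - u⟫ := by
  simp only [inner_sub_left, inner_add_left, inner_neg_left,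
    ContinuousLinearMap.adjoint_inner_left]
  constructor <;> intro h <;> linarith

end AdjointComp

/-- Unique existence of the solution of the continuous Biot contact problem. -/
theorem stmt_2 {H Q : Type*}
    [NormedAddCommGroup H] [InnerProductSpace ℝ H] [CompleteSpace H]
    [NormedAddCommGroup Q] [InnerProductSpace ℝ Q] [CompleteSpace Q]
    (B : H →L[ℝ] Q) (hB : ‖B‖ ≤ 1)
    (K : Set H) (hK_ne : K.Nonempty) (hK_cl : IsClosed K) (hK_cv : Convex ℝ K)
    (f_e : H) (f_f : Q) :
    ∃! up : H × Q, up.1 ∈ K ∧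
      (∀ v ∈ K, ⟪up.1, v - up.1⟫ - ⟪up.2, B (v - up.1)⟫ ≥ ⟪f_e, v - up.1⟫) ∧
      (∀ q : Q, -⟪B up.1, q⟫ - ⟪up.2, q⟫ = ⟪f_f, q⟫) := by
  set g := f_e - B.adjoint f_f
  obtain ⟨u, huK, hu⟩ := exists_forall_inner_nonneg_of_contracting hK_ne hK_cl hK_cv
    (by norm_num) (by norm_num) (lipschitzWith_sub_half_smul_add_adjoint B hB g)
  refine ⟨(u, -B u - f_f), ⟨huK, fun v hv => (biot_displacement_iff B f_e u v f_f).2 (hu v hv),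
    (biot_pressure_iff B u _ f_f).2 rfl⟩, ?_⟩
  rintro ⟨u', p'⟩ ⟨hu'K, hdisp, hpres⟩
  obtain rfl := (biot_pressure_iff B u' p' f_f).1 hpres
  have hu' := (biot_displacement_iff B f_e u' u f_f).1 (hdisp u huK)
  obtain rfl := eq_of_inner_nonneg_of_strictMonotone
    (fun _ _ => inner_add_adjoint_apply_sub_pos B g) (hu u' hu'K) hu'
  rfl
end

section
/- Let K₀ ⊆ H be a nonempty closed convex set, and let G, G̃ ∈ H. Suppose (u,p) solves the continuous Biot contact problem with data (f_e, f_f) and admissible set K = G + K₀, and (ũ,p̃) solves it with data (f̃_e, f̃_f) and admissible set K̃ = G̃ + K₀. Then (‖u − ũ‖_H² + ‖p − p̃‖_Q²)^{1/2} ≤ ‖f_e − f̃_e‖_H + ‖f_f − f̃_f‖_Q + 3‖G − G̃‖_H. In particular the solution depends Lipschitz-continuously on the data. -/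
open scoped RealInnerProductSpace

/-- Lipschitz-continuous dependence of the solution of the continuous Biot
contact problem on the data `(f_e, f_f, G)`, where the admissible set is the
translate `G + K₀` of a fixed nonempty closed convex set `K₀`. -/
theorem stmt_3 {H Q : Type*}
    [NormedAddCommGroup H] [InnerProductSpace ℝ H] [CompleteSpace H]
    [NormedAddCommGroup Q] [InnerProductSpace ℝ Q] [CompleteSpace Q]
    (B : H →L[ℝ] Q) (hB : ‖B‖ ≤ 1)
    (K₀ : Set H) (hK_ne : K₀.Nonempty) (hK_cl : IsClosed K₀) (hK_cv : Convex ℝ K₀)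
    (G G' : H) (f_e f_e' : H) (f_f f_f' : Q)
    (u u' : H) (p p' : Q)
    (hu : u ∈ (fun w => G + w) '' K₀)
    (hVI : ∀ v ∈ (fun w => G + w) '' K₀,
      ⟪u, v - u⟫ - ⟪p, B (v - u)⟫ ≥ ⟪f_e, v - u⟫)
    (hEq : ∀ q : Q, -⟪B u, q⟫ - ⟪p, q⟫ = ⟪f_f, q⟫)
    (hu' : u' ∈ (fun w => G' + w) '' K₀)
    (hVI' : ∀ v ∈ (fun w => G' + w) '' K₀,
      ⟪u', v - u'⟫ - ⟪p', B (v - u')⟫ ≥ ⟪f_e', v - u'⟫)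
    (hEq' : ∀ q : Q, -⟪B u', q⟫ - ⟪p', q⟫ = ⟪f_f', q⟫) :
    Real.sqrt (‖u - u'‖ ^ 2 + ‖p - p'‖ ^ 2) ≤
      ‖f_e - f_e'‖ + ‖f_f - f_f'‖ + 3 * ‖G - G'‖ := by
  obtain ⟨w, hwK, hw⟩ := hu
  obtain ⟨w', hw'K, hw'⟩ := hu'
  simp only [] at hw hw'
  have hv1 : u' + (G - G') ∈ (fun w => G + w) '' K₀ := by
    refine ⟨w', hw'K, ?_⟩
    simp only []
    rw [← hw']; abel
  have hv2 : u - (G - G') ∈ (fun w => G' + w) '' K₀ := by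
    refine ⟨w, hwK, ?_⟩
    simp only []
    rw [← hw]; abel
  have h1 := hVI _ hv1
  have h2 := hVI' _ hv2
  have h3 := hEq (p - p')
  have h3' := hEq' (p - p')
  -- key inequality for the shifted error e = u - u' - (G - G')
  have hkey : ‖u - u' - (G - G')‖ ^ 2 + ‖p - p'‖ ^ 2 ≤
      ⟪u - u' - (G - G'), (f_e - f_e') - (G - G')⟫ -
        ⟪p - p', (f_f - f_f') + B (G - G')⟫ := by
    have e1 : ‖u - u' - (G - G')‖ ^ 2 = ⟪u - u' - (G - G'), u - u' - (G - G')⟫ :=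
      (real_inner_self_eq_norm_sq _).symm
    have e2 : ‖p - p'‖ ^ 2 = ⟪p - p', p - p'⟫ := (real_inner_self_eq_norm_sq _).symm
    rw [e1, e2]
    simp only [map_sub, map_add, inner_sub_left, inner_sub_right, inner_add_left,
      inner_add_right] at h1 h2 h3 h3' ⊢
    linarith [real_inner_comm u u', real_inner_comm u G, real_inner_comm u G',
      real_inner_comm u' G, real_inner_comm u' G', real_inner_comm G G',
      real_inner_comm f_e u, real_inner_comm f_e u', real_inner_comm f_e G,
      real_inner_comm f_e G', real_inner_comm f_e' u, real_inner_comm f_e' u',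
      real_inner_comm f_e' G, real_inner_comm f_e' G',
      real_inner_comm p (B u), real_inner_comm p (B u'), real_inner_comm p (B G),
      real_inner_comm p (B G'), real_inner_comm p' (B u), real_inner_comm p' (B u'),
      real_inner_comm p' (B G), real_inner_comm p' (B G'),
      real_inner_comm p p', real_inner_comm f_f p, real_inner_comm f_f p',
      real_inner_comm f_f' p, real_inner_comm f_f' p']
  have hBd : ‖B (G - G')‖ ≤ ‖G - G'‖ := by
    refine (B.le_opNorm _).trans ?_
    exact mul_le_of_le_one_left (norm_nonneg _) hB
  set a := ‖u - u' - (G - G')‖ with ha_def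
  set b := ‖p - p'‖ with hb_def
  set de := ‖f_e - f_e'‖ with hde_def
  set df := ‖f_f - f_f'‖ with hdf_def
  set dg := ‖G - G'‖ with hdg_def
  have hkey2 : a ^ 2 + b ^ 2 ≤ a * (de + dg) + b * (df + dg) := by
    have c1 : ⟪u - u' - (G - G'), (f_e - f_e') - (G - G')⟫ ≤
        a * ‖(f_e - f_e') - (G - G')‖ := real_inner_le_norm _ _
    have c2 : -⟪p - p', (f_f - f_f') + B (G - G')⟫ ≤
        b * ‖(f_f - f_f') + B (G - G')‖ := by
      have := abs_real_inner_le_norm (p - p') ((f_f - f_f') + B (G - G'))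
      have h := neg_abs_le (⟪p - p', (f_f - f_f') + B (G - G')⟫)
      linarith
    have n1 : ‖(f_e - f_e') - (G - G')‖ ≤ de + dg := norm_sub_le _ _
    have n2 : ‖(f_f - f_f') + B (G - G')‖ ≤ df + dg :=
      (norm_add_le _ _).trans (by linarith)
    nlinarith [norm_nonneg (u - u' - (G - G')), norm_nonneg (p - p')]
  -- s = shifted error magnitude
  set s := Real.sqrt (a ^ 2 + b ^ 2) with hs_def
  have hab : (0:ℝ) ≤ a ^ 2 + b ^ 2 := by positivity
  have hs2 : s ^ 2 = a ^ 2 + b ^ 2 := Real.sq_sqrt hab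
  have hs0 : 0 ≤ s := Real.sqrt_nonneg _
  have ha_le : a ≤ s := by
    have h := Real.sqrt_le_sqrt (show a ^ 2 ≤ a ^ 2 + b ^ 2 by nlinarith [sq_nonneg b])
    rwa [Real.sqrt_sq (norm_nonneg _)] at h
  have hb_le : b ≤ s := by
    have h := Real.sqrt_le_sqrt (show b ^ 2 ≤ a ^ 2 + b ^ 2 by nlinarith [sq_nonneg a])
    rwa [Real.sqrt_sq (norm_nonneg _)] at h
  have hM0 : (0:ℝ) ≤ de + df + 2 * dg := by positivity
  have hsM : s ≤ de + df + 2 * dg := by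
    rcases eq_or_lt_of_le hs0 with h | h
    · linarith
    · have hss : s * s ≤ s * (de + df + 2 * dg) := by
        have h1 : a * (de + dg) ≤ s * (de + dg) :=
          mul_le_mul_of_nonneg_right ha_le (by positivity)
        have h2 : b * (df + dg) ≤ s * (df + dg) :=
          mul_le_mul_of_nonneg_right hb_le (by positivity)
        have hsq : s * s = a ^ 2 + b ^ 2 := by rw [← pow_two]; exact hs2
        have hexp : s * (de + df + 2 * dg) = s * (de + dg) + s * (df + dg) := by ring
        linarith
      exact (mul_le_mul_iff_right₀ h).mp hss
  -- finish
  have hX : ‖u - u'‖ ≤ a + dg := by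
    have : u - u' = (u - u' - (G - G')) + (G - G') := by abel
    rw [this]
    exact norm_add_le _ _
  have hRHS0 : (0:ℝ) ≤ de + df + 3 * dg := by positivity
  have hfinal : ‖u - u'‖ ^ 2 + ‖p - p'‖ ^ 2 ≤ (de + df + 3 * dg) ^ 2 := by
    have hX0 : (0:ℝ) ≤ ‖u - u'‖ := norm_nonneg _
    have hdg0 : (0:ℝ) ≤ dg := norm_nonneg _
    have step1 : ‖u - u'‖ ^ 2 ≤ (a + dg) ^ 2 := pow_le_pow_left₀ hX0 hX 2
    have hm : a * dg ≤ s * dg := mul_le_mul_of_nonneg_right ha_le hdg0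
    have e1 : (a + dg) ^ 2 + b ^ 2 = s ^ 2 + 2 * (a * dg) + dg ^ 2 := by
      rw [hs2]; ring
    have e2 : (s + dg) ^ 2 = s ^ 2 + 2 * (s * dg) + dg ^ 2 := by ring
    have step3 : (s + dg) ^ 2 ≤ (de + df + 3 * dg) ^ 2 :=
      pow_le_pow_left₀ (by positivity) (by linarith) 2
    have hb2 : ‖p - p'‖ ^ 2 = b ^ 2 := by rw [hb_def]
    linarith
  calc Real.sqrt (‖u - u'‖ ^ 2 + ‖p - p'‖ ^ 2)
      ≤ Real.sqrt ((de + df + 3 * dg) ^ 2) := Real.sqrt_le_sqrt hfinal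
    _ = de + df + 3 * dg := Real.sqrt_sq hRHS0
end

section
/- Let K₀ ⊆ H be a closed convex set containing 0 and G ∈ H, and let (u,p) solve the continuous Biot contact problem with admissible set K = G + K₀ and data (f_e, f_f). Then (‖u‖_H² + ‖p‖_Q²)^{1/2} ≤ ‖f_e‖_H + ‖f_f‖_Q + 3‖G‖_H. -/
open scoped RealInnerProductSpace

/-!
Testing the variational inequality with `v = G` (admissible because `0 ∈ K₀`) and the equation
with `q = p` makes the coupling terms `⟪p, B u⟫` cancel, leaving the energy bound
`‖u‖² + ‖p‖² ≤ ⟪u, G⟫ - ⟪p, B G⟫ + ⟪f_e, u - G⟫ - ⟪f_f, p⟫`. By Cauchy–Schwarz and `‖B‖ ≤ 1`,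
`r = √(‖u‖² + ‖p‖²)` satisfies `r² ≤ (‖f_e‖ + ‖f_f‖ + 2‖G‖) r + ‖G‖ ‖f_e‖`, and this quadratic
inequality forces `r ≤ ‖f_e‖ + ‖f_f‖ + 3‖G‖`.
-/

lemma le_add_of_sq_le_mul_add_mul {a b r s : ℝ} (ha : 0 ≤ a) (hb : 0 ≤ b) (hs : s ≤ a + b)
    (h : r ^ 2 ≤ a * r + b * s) : r ≤ a + b := by
  nlinarith

section Biot

variable {H Q : Type*} [NormedAddCommGroup H] [InnerProductSpace ℝ H]
  [NormedAddCommGroup Q] [InnerProductSpace ℝ Q]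

lemma biot_energy_le_inner (B : H →L[ℝ] Q) {G f_e u : H} {f_f p : Q}
    (hVI : ⟪u, G - u⟫ - ⟪p, B (G - u)⟫ ≥ ⟪f_e, G - u⟫)
    (hEq : -⟪B u, p⟫ - ⟪p, p⟫ = ⟪f_f, p⟫) :
    ‖u‖ ^ 2 + ‖p‖ ^ 2 ≤ ⟪u, G⟫ + ⟪-p, B G⟫ + ⟪f_e, u - G⟫ + ⟪-f_f, p⟫ := by
  rw [map_sub, inner_sub_right, inner_sub_right, inner_sub_right, real_inner_self_eq_norm_sq] at hVI
  rw [real_inner_self_eq_norm_sq, real_inner_comm p (B u)] at hEq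
  rw [inner_neg_left, inner_neg_left, inner_sub_right]
  linarith

lemma biot_energy_le_norm {B : H →L[ℝ] Q} (hB : ‖B‖ ≤ 1) {G f_e u : H} {f_f p : Q}
    (hVI : ⟪u, G - u⟫ - ⟪p, B (G - u)⟫ ≥ ⟪f_e, G - u⟫)
    (hEq : -⟪B u, p⟫ - ⟪p, p⟫ = ⟪f_f, p⟫) :
    ‖u‖ ^ 2 + ‖p‖ ^ 2 ≤ ‖u‖ * ‖G‖ + ‖p‖ * ‖G‖ + ‖f_e‖ * (‖u‖ + ‖G‖) + ‖f_f‖ * ‖p‖ := by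
  have hBG : ‖B G‖ ≤ ‖G‖ := by simpa using B.le_of_opNorm_le hB G
  have hG : ‖u - G‖ ≤ ‖u‖ + ‖G‖ := norm_sub_le u G
  calc ‖u‖ ^ 2 + ‖p‖ ^ 2 ≤ ⟪u, G⟫ + ⟪-p, B G⟫ + ⟪f_e, u - G⟫ + ⟪-f_f, p⟫ :=
        biot_energy_le_inner B hVI hEq
    _ ≤ ‖u‖ * ‖G‖ + ‖-p‖ * ‖B G‖ + ‖f_e‖ * ‖u - G‖ + ‖-f_f‖ * ‖p‖ := by
        gcongr <;> exact real_inner_le_norm _ _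
    _ ≤ ‖u‖ * ‖G‖ + ‖p‖ * ‖G‖ + ‖f_e‖ * (‖u‖ + ‖G‖) + ‖f_f‖ * ‖p‖ := by
        rw [norm_neg, norm_neg]
        gcongr

end Biot

theorem stmt_4_general {H Q : Type*}
    [NormedAddCommGroup H] [InnerProductSpace ℝ H]
    [NormedAddCommGroup Q] [InnerProductSpace ℝ Q]
    (B : H →L[ℝ] Q) (hB : ‖B‖ ≤ 1)
    (K₀ : Set H) (hK0 : (0 : H) ∈ K₀)
    (G : H) (f_e : H) (f_f : Q) (u : H) (p : Q)
    (hVI : ∀ v ∈ (fun w => G + w) '' K₀,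
      ⟪u, v - u⟫ - ⟪p, B (v - u)⟫ ≥ ⟪f_e, v - u⟫)
    (hEq : ∀ q : Q, -⟪B u, q⟫ - ⟪p, q⟫ = ⟪f_f, q⟫) :
    Real.sqrt (‖u‖ ^ 2 + ‖p‖ ^ 2) ≤ ‖f_e‖ + ‖f_f‖ + 3 * ‖G‖ := by
  have hEnergy := biot_energy_le_norm hB (hVI G ⟨0, hK0, add_zero G⟩) (hEq p)
  set r := Real.sqrt (‖u‖ ^ 2 + ‖p‖ ^ 2)
  have hr : r ^ 2 = ‖u‖ ^ 2 + ‖p‖ ^ 2 := Real.sq_sqrt (by positivity)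
  have hu : ‖u‖ ≤ r := Real.le_sqrt_of_sq_le (le_add_of_nonneg_right (sq_nonneg _))
  have hp : ‖p‖ ≤ r := Real.le_sqrt_of_sq_le (le_add_of_nonneg_left (sq_nonneg _))
  have hQuadratic :
      r ^ 2 ≤ (‖f_e‖ + ‖f_f‖ + 2 * ‖G‖) * r + ‖G‖ * ‖f_e‖ := by
    rw [hr]
    refine hEnergy.trans ?_
    nlinarith [norm_nonneg G, norm_nonneg f_e, norm_nonneg f_f]
  have hf_e : ‖f_e‖ ≤ ‖f_e‖ + ‖f_f‖ + 2 * ‖G‖ + ‖G‖ := by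
    linarith [norm_nonneg f_f, norm_nonneg G]
  calc r ≤ ‖f_e‖ + ‖f_f‖ + 2 * ‖G‖ + ‖G‖ :=
        le_add_of_sq_le_mul_add_mul (by positivity) (norm_nonneg G) hf_e hQuadratic
    _ = ‖f_e‖ + ‖f_f‖ + 3 * ‖G‖ := by ring

/-- A priori estimate for the solution of the continuous Biot contact problem
with admissible set `K = G + K₀`, where `K₀` is closed, convex and contains `0`. -/
theorem stmt_4 {H Q : Type*}
    [NormedAddCommGroup H] [InnerProductSpace ℝ H] [CompleteSpace H]
    [NormedAddCommGroup Q] [InnerProductSpace ℝ Q] [CompleteSpace Q]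
    (B : H →L[ℝ] Q) (hB : ‖B‖ ≤ 1)
    (K₀ : Set H) (hK0 : (0 : H) ∈ K₀) (hK_cl : IsClosed K₀) (hK_cv : Convex ℝ K₀)
    (G : H) (f_e : H) (f_f : Q) (u : H) (p : Q)
    (hu : u ∈ (fun w => G + w) '' K₀)
    (hVI : ∀ v ∈ (fun w => G + w) '' K₀,
      ⟪u, v - u⟫ - ⟪p, B (v - u)⟫ ≥ ⟪f_e, v - u⟫)
    (hEq : ∀ q : Q, -⟪B u, q⟫ - ⟪p, q⟫ = ⟪f_f, q⟫) :
    Real.sqrt (‖u‖ ^ 2 + ‖p‖ ^ 2) ≤ ‖f_e‖ + ‖f_f‖ + 3 * ‖G‖ :=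
  stmt_4_general B hB K₀ hK0 G f_e f_f u p hVI hEq
end

section
/- If 0 ∈ K and (u,p) solves the continuous Biot contact problem, then (‖u‖_H² + ‖p‖_Q²)^{1/2} ≤ ‖f_e‖_H + ‖f_f‖_Q. -/
/-!
Testing the variational inequality with `v = 0` and the pressure equation with `q = p`, the
coupling terms `⟪p, B u⟫` cancel, leaving the energy bound
`‖u‖² + ‖p‖² ≤ ⟪f_e, u⟫ - ⟪f_f, p⟫ ≤ (‖f_e‖ + ‖f_f‖) √(‖u‖² + ‖p‖²)`.
-/

open scoped RealInnerProductSpace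

theorem Real.sqrt_sq_add_sq_le_add {x y a b : ℝ} (ha : 0 ≤ a) (hb : 0 ≤ b)
    (h : x ^ 2 + y ^ 2 ≤ a * x + b * y) : √(x ^ 2 + y ^ 2) ≤ a + b := by
  set s := √(x ^ 2 + y ^ 2)
  have hs : 0 ≤ s := Real.sqrt_nonneg _
  have hs_sq : s ^ 2 = x ^ 2 + y ^ 2 := Real.sq_sqrt (by positivity)
  have hxs : x ≤ s := Real.le_sqrt_of_sq_le (le_add_of_nonneg_right (sq_nonneg y))
  have hys : y ≤ s := Real.le_sqrt_of_sq_le (le_add_of_nonneg_left (sq_nonneg x))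
  have hs_le : s ^ 2 ≤ (a + b) * s :=
    calc s ^ 2 ≤ a * x + b * y := hs_sq ▸ h
      _ ≤ a * s + b * s := by gcongr
      _ = (a + b) * s := by ring
  nlinarith

section Biot

variable {H Q : Type*} [NormedAddCommGroup H] [InnerProductSpace ℝ H]
  [NormedAddCommGroup Q] [InnerProductSpace ℝ Q]

theorem biot_energy_le (B : H →L[ℝ] Q) {f_e u : H} {f_f p : Q}
    (hVI : ⟪u, 0 - u⟫ - ⟪p, B (0 - u)⟫ ≥ ⟪f_e, 0 - u⟫)
    (hEq : -⟪B u, p⟫ - ⟪p, p⟫ = ⟪f_f, p⟫) :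
    ‖u‖ ^ 2 + ‖p‖ ^ 2 ≤ ⟪f_e, u⟫ - ⟪f_f, p⟫ := by
  simp only [zero_sub, map_neg, inner_neg_right, real_inner_self_eq_norm_sq] at hVI
  rw [real_inner_comm p (B u), real_inner_self_eq_norm_sq] at hEq
  linarith

end Biot

theorem stmt_5_general {H Q : Type*}
    [NormedAddCommGroup H] [InnerProductSpace ℝ H]
    [NormedAddCommGroup Q] [InnerProductSpace ℝ Q]
    (B : H →L[ℝ] Q)
    (K : Set H) (hK0 : (0 : H) ∈ K)
    (f_e : H) (f_f : Q) (u : H) (p : Q)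
    (hVI : ∀ v ∈ K, ⟪u, v - u⟫ - ⟪p, B (v - u)⟫ ≥ ⟪f_e, v - u⟫)
    (hEq : ∀ q : Q, -⟪B u, q⟫ - ⟪p, q⟫ = ⟪f_f, q⟫) :
    Real.sqrt (‖u‖ ^ 2 + ‖p‖ ^ 2) ≤ ‖f_e‖ + ‖f_f‖ := by
  refine Real.sqrt_sq_add_sq_le_add (norm_nonneg f_e) (norm_nonneg f_f) ?_
  have hf_f : -⟪f_f, p⟫ ≤ ‖f_f‖ * ‖p‖ := by
    simpa only [inner_neg_right, norm_neg] using real_inner_le_norm f_f (-p)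
  calc ‖u‖ ^ 2 + ‖p‖ ^ 2 ≤ ⟪f_e, u⟫ - ⟪f_f, p⟫ := biot_energy_le B (hVI 0 hK0) (hEq p)
    _ ≤ ‖f_e‖ * ‖u‖ + ‖f_f‖ * ‖p‖ := by linarith [real_inner_le_norm f_e u]

/-- A priori estimate for the solution of the continuous Biot contact problem
when `0 ∈ K`. -/
theorem stmt_5 {H Q : Type*}
    [NormedAddCommGroup H] [InnerProductSpace ℝ H] [CompleteSpace H]
    [NormedAddCommGroup Q] [InnerProductSpace ℝ Q] [CompleteSpace Q]
    (B : H →L[ℝ] Q) (hB : ‖B‖ ≤ 1)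
    (K : Set H) (hK0 : (0 : H) ∈ K) (hK_cl : IsClosed K) (hK_cv : Convex ℝ K)
    (f_e : H) (f_f : Q) (u : H) (p : Q)
    (hu : u ∈ K)
    (hVI : ∀ v ∈ K, ⟪u, v - u⟫ - ⟪p, B (v - u)⟫ ≥ ⟪f_e, v - u⟫)
    (hEq : ∀ q : Q, -⟪B u, q⟫ - ⟪p, q⟫ = ⟪f_f, q⟫) :
    Real.sqrt (‖u‖ ^ 2 + ‖p‖ ^ 2) ≤ ‖f_e‖ + ‖f_f‖ :=
  stmt_5_general B K hK0 f_e f_f u p hVI hEq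
end

section
/- There exists exactly one solution (u_N, p_M) ∈ K_N × W of the discrete Biot contact problem, and it satisfies the stability estimate (‖u_N‖_H² + ‖p_M‖_Q²)^{1/2} ≤ 2‖f_e‖_H + ‖f_f‖_Q + 3·inf_{v_N ∈ K_N} ‖v_N‖_H. -/
open scoped RealInnerProductSpace

open scoped NNReal

set_option linter.unusedVariables false

/-- Existence and uniqueness for the variational inequality
`u ∈ K`, `⟪S u - g, v - u⟫ ≥ 0` for all `v ∈ K`, where `S` is coercive and bounded. -/
theorem vi_exists_unique {H : Type*} [NormedAddCommGroup H] [InnerProductSpace ℝ H]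
    [CompleteSpace H]
    (S : H →L[ℝ] H) (hco : ∀ x, ‖x‖ ^ 2 ≤ ⟪S x, x⟫) (hbd : ∀ x, ‖S x‖ ≤ 2 * ‖x‖)
    (g : H) (K : Set H) (hne : K.Nonempty) (hcl : IsClosed K) (hcv : Convex ℝ K) :
    ∃! u : H, u ∈ K ∧ ∀ v ∈ K, 0 ≤ ⟪S u - g, v - u⟫ := by
  have hKc : IsComplete K := hcl.isComplete
  have hproj : ∀ a : H, ∃ w, w ∈ K ∧ ∀ v ∈ K, ⟪a - w, v - w⟫ ≤ 0 := by
    intro a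
    obtain ⟨w, hwK, hw⟩ := exists_norm_eq_iInf_of_complete_convex hne hKc hcv a
    exact ⟨w, hwK, (norm_eq_iInf_iff_real_inner_le_zero hcv hwK).1 hw⟩
  set P : H → H := fun a => (hproj a).choose with hPdef
  have hPK : ∀ a, P a ∈ K := fun a => (hproj a).choose_spec.1
  have hP : ∀ a, ∀ v ∈ K, ⟪a - P a, v - P a⟫ ≤ 0 := fun a => (hproj a).choose_spec.2
  -- P is nonexpansive
  have hPlip : ∀ a b, ‖P a - P b‖ ≤ ‖a - b‖ := by
    intro a b
    have h1 := hP a (P b) (hPK b)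
    have h2 := hP b (P a) (hPK a)
    have key : ‖P a - P b‖ ^ 2 ≤ ⟪a - b, P a - P b⟫ := by
      rw [← real_inner_self_eq_norm_sq]
      simp only [inner_sub_left, inner_sub_right] at h1 h2 ⊢
      linarith [real_inner_comm a (P a), real_inner_comm a (P b), real_inner_comm b (P a),
        real_inner_comm b (P b), real_inner_comm (P a) (P b)]
    have hle := real_inner_le_norm (a - b) (P a - P b)
    nlinarith [norm_nonneg (P a - P b), norm_nonneg (a - b)]
  set f : H → H := fun x => P (x - (4 : ℝ)⁻¹ • (S x - g)) with hfdef
  have hmaps : Set.MapsTo f K K := fun x _ => hPK _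
  have hflip : ∀ x y : H, ‖f x - f y‖ ≤ (9 / 10) * ‖x - y‖ := by
    intro x y
    have h0 : (x - (4 : ℝ)⁻¹ • (S x - g)) - (y - (4 : ℝ)⁻¹ • (S y - g))
        = (x - y) - (4 : ℝ)⁻¹ • S (x - y) := by
      simp only [map_sub, smul_sub]
      abel
    set z := x - y with hz
    have hs1 : ‖z - (4 : ℝ)⁻¹ • S z‖ ^ 2 ≤ (81 / 100) * ‖z‖ ^ 2 := by
      rw [norm_sub_sq_real]
      rw [real_inner_smul_right, norm_smul]
      have h1 := hco z
      have h2 := hbd z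
      have h3 : ⟪z, S z⟫ = ⟪S z, z⟫ := real_inner_comm _ _
      have h4 : ‖(4 : ℝ)⁻¹‖ = (4 : ℝ)⁻¹ := by norm_num [Real.norm_eq_abs]
      rw [h4]
      nlinarith [norm_nonneg (S z), norm_nonneg z,
        mul_le_mul h2 h2 (norm_nonneg _) (by positivity)]
    calc ‖f x - f y‖ ≤ ‖(x - (4 : ℝ)⁻¹ • (S x - g)) - (y - (4 : ℝ)⁻¹ • (S y - g))‖ :=
            hPlip _ _
      _ = ‖z - (4 : ℝ)⁻¹ • S z‖ := by rw [h0]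
      _ ≤ (9 / 10) * ‖z‖ := by
            nlinarith [norm_nonneg (z - (4 : ℝ)⁻¹ • S z), norm_nonneg z]
  have hcon : ContractingWith (9 / 10 : ℝ≥0) (hmaps.restrict f K K) := by
    constructor
    · rw [← NNReal.coe_lt_coe]
      norm_num
    · apply LipschitzWith.of_dist_le_mul
      intro a b
      have h := hflip (a : H) (b : H)
      have hc : ((9 / 10 : ℝ≥0) : ℝ) = 9 / 10 := by norm_num
      rw [hc]
      simpa [Subtype.dist_eq, dist_eq_norm] using h
  obtain ⟨x0, hx0⟩ := hne
  obtain ⟨u, huK, hufix, -, -⟩ :=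
    hcon.exists_fixedPoint' hKc hmaps hx0 (edist_ne_top _ _)
  have hVI : ∀ v ∈ K, 0 ≤ ⟪S u - g, v - u⟫ := by
    intro v hv
    have h1 := hP (u - (4 : ℝ)⁻¹ • (S u - g)) v hv
    have h2 : P (u - (4 : ℝ)⁻¹ • (S u - g)) = u := hufix
    rw [h2] at h1
    have h3 : u - (4 : ℝ)⁻¹ • (S u - g) - u = -((4 : ℝ)⁻¹ • (S u - g)) := by abel
    rw [h3, inner_neg_left, real_inner_smul_left] at h1
    linarith
  refine ⟨u, ⟨huK, hVI⟩, ?_⟩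
  rintro u' ⟨hu'K, hVI'⟩
  have h1 := hVI' u huK
  have h2 := hVI u' hu'K
  have hc := hco (u' - u)
  rw [map_sub] at hc
  simp only [inner_sub_left, inner_sub_right] at h1 h2 hc
  have h4 : ‖u' - u‖ ^ 2 ≤ 0 := by linarith
  have h5 : ‖u' - u‖ = 0 := by nlinarith [norm_nonneg (u' - u)]
  have := norm_eq_zero.1 h5
  exact sub_eq_zero.1 this

/-- Unique existence and stability estimate for the solution of the discrete
Biot contact problem: `(‖u_N‖² + ‖p_M‖²)^{1/2} ≤ 2‖f_e‖ + ‖f_f‖ + 3·inf_{v_N ∈ K_N}‖v_N‖`. -/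
theorem stmt_9 {H Q : Type*}
    [NormedAddCommGroup H] [InnerProductSpace ℝ H] [CompleteSpace H]
    [NormedAddCommGroup Q] [InnerProductSpace ℝ Q] [CompleteSpace Q]
    (B : H →L[ℝ] Q) (hB : ‖B‖ ≤ 1)
    (V_N : Submodule ℝ H) (hVN : FiniteDimensional ℝ V_N)
    (K_N : Set H) (hKN_sub : K_N ⊆ (V_N : Set H))
    (hKN_ne : K_N.Nonempty) (hKN_cl : IsClosed K_N) (hKN_cv : Convex ℝ K_N)
    (W : Submodule ℝ Q) (hW : FiniteDimensional ℝ W)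
    (f_e : H) (f_f : Q) :
    (∃! up : H × Q, up.1 ∈ K_N ∧ up.2 ∈ W ∧
      (∀ v_N ∈ K_N, ⟪up.1, v_N - up.1⟫ - ⟪up.2, B (v_N - up.1)⟫ ≥ ⟪f_e, v_N - up.1⟫) ∧
      (∀ q ∈ W, -⟪B up.1, q⟫ - ⟪up.2, q⟫ = ⟪f_f, q⟫)) ∧
    (∀ (u_N : H) (p_M : Q), u_N ∈ K_N → p_M ∈ W →
      (∀ v_N ∈ K_N, ⟪u_N, v_N - u_N⟫ - ⟪p_M, B (v_N - u_N)⟫ ≥ ⟪f_e, v_N - u_N⟫) →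
      (∀ q ∈ W, -⟪B u_N, q⟫ - ⟪p_M, q⟫ = ⟪f_f, q⟫) →
      Real.sqrt (‖u_N‖ ^ 2 + ‖p_M‖ ^ 2) ≤
        2 * ‖f_e‖ + ‖f_f‖ + 3 * sInf (norm '' K_N)) := by
  haveI : CompleteSpace W := FiniteDimensional.complete ℝ W
  set π : Q →L[ℝ] Q := W.subtypeL.comp (W.orthogonalProjectionOnto) with hπdef
  have hπmem : ∀ x, π x ∈ W := fun x => (W.orthogonalProjectionOnto x).2
  have hπort : ∀ (x : Q), ∀ q ∈ W, ⟪x - π x, q⟫ = 0 := by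
    intro x q hq
    exact Submodule.starProjection_inner_eq_zero x q hq
  have hπpos : ∀ y : Q, 0 ≤ ⟪π y, y⟫ := by
    intro y
    have h1 : ⟪y - π y, π y⟫ = 0 := hπort y (π y) (hπmem y)
    have h3 : ⟪π y, y - π y⟫ = 0 := by rw [real_inner_comm]; exact h1
    have h4 : ⟪π y, y⟫ - ⟪π y, π y⟫ = 0 := by rw [← inner_sub_right]; exact h3
    have h5 := real_inner_self_eq_norm_sq (π y)
    nlinarith [sq_nonneg ‖π y‖]
  have hπnorm : ∀ y : Q, ‖π y‖ ≤ ‖y‖ := by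
    intro y
    have h1 : ⟪y - π y, π y⟫ = 0 := hπort y (π y) (hπmem y)
    have h2 : ‖π y‖ ^ 2 ≤ ⟪y, π y⟫ := by
      rw [inner_sub_left] at h1
      rw [← real_inner_self_eq_norm_sq]
      linarith
    have h3 := real_inner_le_norm y (π y)
    nlinarith [norm_nonneg (π y), norm_nonneg y]
  have hBadj : ∀ z : Q, ‖ContinuousLinearMap.adjoint B z‖ ≤ ‖z‖ := by
    intro z
    have h1 : ‖ContinuousLinearMap.adjoint B‖ = ‖B‖ :=
      ContinuousLinearMap.adjoint.norm_map B
    calc ‖ContinuousLinearMap.adjoint B z‖ ≤ ‖ContinuousLinearMap.adjoint B‖ * ‖z‖ :=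
          (ContinuousLinearMap.adjoint B).le_opNorm z
      _ ≤ 1 * ‖z‖ := by
          apply mul_le_mul_of_nonneg_right _ (norm_nonneg z)
          rw [h1]; exact hB
      _ = ‖z‖ := one_mul _
  have hBnorm : ∀ x : H, ‖B x‖ ≤ ‖x‖ := by
    intro x
    calc ‖B x‖ ≤ ‖B‖ * ‖x‖ := B.le_opNorm x
      _ ≤ 1 * ‖x‖ := mul_le_mul_of_nonneg_right hB (norm_nonneg x)
      _ = ‖x‖ := one_mul _
  set S : H →L[ℝ] H :=
    ContinuousLinearMap.id ℝ H + (ContinuousLinearMap.adjoint B).comp (π.comp B) with hSdef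
  set g : H := f_e - ContinuousLinearMap.adjoint B (π f_f) with hgdef
  have hSapp : ∀ x, S x = x + ContinuousLinearMap.adjoint B (π (B x)) := fun x => rfl
  have hco : ∀ x, ‖x‖ ^ 2 ≤ ⟪S x, x⟫ := by
    intro x
    rw [hSapp, inner_add_left, ContinuousLinearMap.adjoint_inner_left,
      real_inner_self_eq_norm_sq]
    have := hπpos (B x)
    linarith
  have hbd : ∀ x, ‖S x‖ ≤ 2 * ‖x‖ := by
    intro x
    rw [hSapp]
    calc ‖x + ContinuousLinearMap.adjoint B (π (B x))‖
        ≤ ‖x‖ + ‖ContinuousLinearMap.adjoint B (π (B x))‖ := norm_add_le _ _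
      _ ≤ ‖x‖ + ‖x‖ := by
          have := (hBadj (π (B x))).trans ((hπnorm (B x)).trans (hBnorm x))
          linarith
      _ = 2 * ‖x‖ := by ring
  -- the pressure associated to a displacement
  set pf : H → Q := fun u => π (-(B u) - f_f) with hpfdef
  have hpfW : ∀ u, pf u ∈ W := fun u => hπmem _
  have heq2 : ∀ u : H, ∀ q ∈ W, -⟪B u, q⟫ - ⟪pf u, q⟫ = ⟪f_f, q⟫ := by
    intro u q hq
    have h := hπort (-(B u) - f_f) q hq
    rw [inner_sub_left, inner_sub_left, inner_neg_left] at h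
    simp only [hpfdef]
    linarith
  have heq1 : ∀ u w : H, ⟪u, w⟫ - ⟪pf u, B w⟫ - ⟪f_e, w⟫ = ⟪S u - g, w⟫ := by
    intro u w
    rw [inner_sub_left, hSapp, inner_add_left, ContinuousLinearMap.adjoint_inner_left,
      hgdef, inner_sub_left, ContinuousLinearMap.adjoint_inner_left]
    have hπlin : pf u = -(π (B u)) - π f_f := by
      simp only [hpfdef]
      rw [map_sub, map_neg]
    rw [hπlin, inner_sub_left, inner_neg_left]
    ring
  have hpuniq : ∀ u : H, ∀ p, p ∈ W → (∀ q ∈ W, -⟪B u, q⟫ - ⟪p, q⟫ = ⟪f_f, q⟫) →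
      p = pf u := by
    intro u p hp h
    have hd : ∀ q ∈ W, ⟪p - pf u, q⟫ = 0 := by
      intro q hq
      have h1 := h q hq
      have h2 := heq2 u q hq
      rw [inner_sub_left]
      linarith
    have := hd (p - pf u) (Submodule.sub_mem W hp (hpfW u))
    rw [real_inner_self_eq_norm_sq] at this
    have : ‖p - pf u‖ = 0 := by nlinarith [norm_nonneg (p - pf u)]
    exact sub_eq_zero.1 (norm_eq_zero.1 this)
  obtain ⟨u, ⟨huK, huVI⟩, huniq⟩ :=
    vi_exists_unique S hco hbd g K_N hKN_ne hKN_cl hKN_cv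
  constructor
  · refine ⟨(u, pf u), ⟨huK, hpfW u, ?_, heq2 u⟩, ?_⟩
    · intro v hv
      have h1 := huVI v hv
      have h2 := heq1 u (v - u)
      linarith
    · rintro ⟨u', p'⟩ ⟨hu'K, hp'W, h1', h2'⟩
      have hp' : p' = pf u' := hpuniq u' p' hp'W h2'
      have hu'VI : ∀ v ∈ K_N, 0 ≤ ⟪S u' - g, v - u'⟫ := by
        intro v hv
        have h1 := h1' v hv
        have h2 := heq1 u' (v - u')
        rw [hp'] at h1
        linarith
      have hu' : u' = u := huniq u' ⟨hu'K, hu'VI⟩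
      exact Prod.ext hu' (by rw [hp', hu'])
  · intro u p huK hpW h1 h2
    have key : ∀ v ∈ K_N, Real.sqrt (‖u‖ ^ 2 + ‖p‖ ^ 2) ≤ 2 * ‖f_e‖ + ‖f_f‖ + 3 * ‖v‖ := by
      intro v hv
      set N := Real.sqrt (‖u‖ ^ 2 + ‖p‖ ^ 2) with hN
      have hNsq : N ^ 2 = ‖u‖ ^ 2 + ‖p‖ ^ 2 := Real.sq_sqrt (by positivity)
      have hN0 : 0 ≤ N := Real.sqrt_nonneg _
      have hNu : ‖u‖ ≤ N := by nlinarith [norm_nonneg u, norm_nonneg p]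
      have hNp : ‖p‖ ≤ N := by nlinarith [norm_nonneg u, norm_nonneg p]
      have e1 := h1 v hv
      have e2 := h2 p hpW
      simp only [map_sub, inner_sub_right, real_inner_self_eq_norm_sq] at e1 e2
      have hcomm : ⟪B u, p⟫ = ⟪p, B u⟫ := real_inner_comm _ _
      have hBv := hBnorm v
      -- individual linear bounds
      have l1 : ⟪u, v⟫ ≤ N * ‖v‖ := by
        have := real_inner_le_norm u v
        have := mul_le_mul_of_nonneg_right hNu (norm_nonneg v)
        linarith
      have l2 : -⟪p, B v⟫ ≤ N * ‖v‖ := by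
        have h2a := abs_real_inner_le_norm p (B v)
        rw [abs_le] at h2a
        have h2b := mul_le_mul_of_nonneg_left hBv (norm_nonneg p)
        have h2c := mul_le_mul_of_nonneg_right hNp (norm_nonneg v)
        linarith
      have l3 : -⟪f_f, p⟫ ≤ N * ‖f_f‖ := by
        have h3a := abs_real_inner_le_norm f_f p
        rw [abs_le] at h3a
        have h3b := mul_le_mul_of_nonneg_left hNp (norm_nonneg f_f)
        linarith
      have l4 : -⟪f_e, v⟫ ≤ ‖f_e‖ * ‖v‖ := by
        have h4a := abs_real_inner_le_norm f_e v
        rw [abs_le] at h4a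
        linarith
      have l5 : ⟪f_e, u⟫ ≤ N * ‖f_e‖ := by
        have := real_inner_le_norm f_e u
        have := mul_le_mul_of_nonneg_left hNu (norm_nonneg f_e)
        linarith
      have main : N ^ 2 ≤ 2 * N * ‖v‖ + N * ‖f_e‖ + N * ‖f_f‖ + ‖f_e‖ * ‖v‖ := by
        linarith
      by_contra hcon
      push_neg at hcon
      have ht0 : (0 : ℝ) ≤ ‖v‖ := norm_nonneg v
      have ha0 : (0 : ℝ) ≤ ‖f_e‖ := norm_nonneg f_e
      have hb0 : (0 : ℝ) ≤ ‖f_f‖ := norm_nonneg f_f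
      have hNpos : 0 < N := lt_of_le_of_lt (by positivity) hcon
      have h5 : ‖f_e‖ ≤ N := by linarith
      have h6 : ‖f_e‖ * ‖v‖ ≤ N * ‖v‖ := mul_le_mul_of_nonneg_right h5 ht0
      have h7 : N * N ≤ N * (3 * ‖v‖ + ‖f_e‖ + ‖f_f‖) := by nlinarith
      have h8 : N ≤ 3 * ‖v‖ + ‖f_e‖ + ‖f_f‖ := (mul_le_mul_iff_right₀ hNpos).mp h7
      linarith
    have hbdd : ∀ b ∈ norm '' K_N,
        (Real.sqrt (‖u‖ ^ 2 + ‖p‖ ^ 2) - (2 * ‖f_e‖ + ‖f_f‖)) / 3 ≤ b := by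
      rintro b ⟨v, hv, rfl⟩
      have := key v hv
      linarith
    have h3 : (Real.sqrt (‖u‖ ^ 2 + ‖p‖ ^ 2) - (2 * ‖f_e‖ + ‖f_f‖)) / 3 ≤
        sInf (norm '' K_N) := le_csInf (hKN_ne.image _) hbdd
    linarith
end

section
/- If 0 ∈ K_N, then the unique solution (u_N, p_M) ∈ K_N × W of the discrete Biot contact problem satisfies (‖u_N‖_H² + ‖p_M‖_Q²)^{1/2} ≤ ‖f_e‖_H + ‖f_f‖_Q. -/
open scoped RealInnerProductSpace

/-- Testing the variational inequality with `v = 0` and the pressure equation with `q = p`,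
the coupling terms `⟪p, B u⟫` cancel. -/
theorem biot_energy_le_load {H Q : Type*}
    [NormedAddCommGroup H] [InnerProductSpace ℝ H]
    [NormedAddCommGroup Q] [InnerProductSpace ℝ Q]
    (B : H →L[ℝ] Q) (K : Set H) (hK0 : (0 : H) ∈ K) (W : Submodule ℝ Q)
    (f_e : H) (f_f : Q) (u : H) (p : Q) (hp : p ∈ W)
    (hVI : ∀ v ∈ K, ⟪u, v - u⟫ - ⟪p, B (v - u)⟫ ≥ ⟪f_e, v - u⟫)
    (hEq : ∀ q ∈ W, -⟪B u, q⟫ - ⟪p, q⟫ = ⟪f_f, q⟫) :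
    ‖u‖ ^ 2 + ‖p‖ ^ 2 ≤ ⟪f_e, u⟫ - ⟪f_f, p⟫ := by
  have hv := hVI 0 hK0
  have hq := hEq p hp
  simp only [zero_sub, map_neg, inner_neg_right, neg_sub_neg] at hv
  rw [real_inner_comm p (B u)] at hq
  rw [← real_inner_self_eq_norm_sq, ← real_inner_self_eq_norm_sq]
  linarith

theorem Real.sqrt_sq_add_sq_le_add_s10 {a b c d : ℝ} (hc : 0 ≤ c) (hd : 0 ≤ d)
    (h : a ^ 2 + b ^ 2 ≤ c * a + d * b) : √(a ^ 2 + b ^ 2) ≤ c + d := by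
  set S := √(a ^ 2 + b ^ 2)
  have hS : S ^ 2 = a ^ 2 + b ^ 2 := Real.sq_sqrt (by positivity)
  have haS : a ≤ S := Real.le_sqrt_of_sq_le (by nlinarith [sq_nonneg b])
  have hbS : b ≤ S := Real.le_sqrt_of_sq_le (by nlinarith [sq_nonneg a])
  have hS_le : S * S ≤ (c + d) * S := by
    nlinarith [mul_le_mul_of_nonneg_left haS hc, mul_le_mul_of_nonneg_left hbS hd]
  nlinarith [Real.sqrt_nonneg (a ^ 2 + b ^ 2)]

theorem stmt_10_general {H Q : Type*}
    [NormedAddCommGroup H] [InnerProductSpace ℝ H]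
    [NormedAddCommGroup Q] [InnerProductSpace ℝ Q]
    (B : H →L[ℝ] Q)
    (K_N : Set H)
    (hKN0 : (0 : H) ∈ K_N)
    (W : Submodule ℝ Q)
    (f_e : H) (f_f : Q) (u_N : H) (p_M : Q)
    (hp : p_M ∈ W)
    (hVI : ∀ v_N ∈ K_N, ⟪u_N, v_N - u_N⟫ - ⟪p_M, B (v_N - u_N)⟫ ≥ ⟪f_e, v_N - u_N⟫)
    (hEq : ∀ q ∈ W, -⟪B u_N, q⟫ - ⟪p_M, q⟫ = ⟪f_f, q⟫) :
    Real.sqrt (‖u_N‖ ^ 2 + ‖p_M‖ ^ 2) ≤ ‖f_e‖ + ‖f_f‖ := by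
  refine Real.sqrt_sq_add_sq_le_add_s10 (norm_nonneg _) (norm_nonneg _) ?_
  calc ‖u_N‖ ^ 2 + ‖p_M‖ ^ 2 ≤ ⟪f_e, u_N⟫ + ⟪f_f, -p_M⟫ := by
        rw [inner_neg_right, ← sub_eq_add_neg]
        exact biot_energy_le_load B K_N hKN0 W f_e f_f u_N p_M hp hVI hEq
    _ ≤ ‖f_e‖ * ‖u_N‖ + ‖f_f‖ * ‖p_M‖ := by
        rw [← norm_neg p_M]
        exact add_le_add (real_inner_le_norm _ _) (real_inner_le_norm _ _)

/-- Stability estimate for the solution of the discrete Biot contact problem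
when `0 ∈ K_N`. -/
theorem stmt_10 {H Q : Type*}
    [NormedAddCommGroup H] [InnerProductSpace ℝ H] [CompleteSpace H]
    [NormedAddCommGroup Q] [InnerProductSpace ℝ Q] [CompleteSpace Q]
    (B : H →L[ℝ] Q) (hB : ‖B‖ ≤ 1)
    (V_N : Submodule ℝ H) (hVN : FiniteDimensional ℝ V_N)
    (K_N : Set H) (hKN_sub : K_N ⊆ (V_N : Set H))
    (hKN0 : (0 : H) ∈ K_N) (hKN_cl : IsClosed K_N) (hKN_cv : Convex ℝ K_N)
    (W : Submodule ℝ Q) (hW : FiniteDimensional ℝ W)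
    (f_e : H) (f_f : Q) (u_N : H) (p_M : Q)
    (hu : u_N ∈ K_N) (hp : p_M ∈ W)
    (hVI : ∀ v_N ∈ K_N, ⟪u_N, v_N - u_N⟫ - ⟪p_M, B (v_N - u_N)⟫ ≥ ⟪f_e, v_N - u_N⟫)
    (hEq : ∀ q ∈ W, -⟪B u_N, q⟫ - ⟪p_M, q⟫ = ⟪f_f, q⟫) :
    Real.sqrt (‖u_N‖ ^ 2 + ‖p_M‖ ^ 2) ≤ ‖f_e‖ + ‖f_f‖ :=
  stmt_10_general B K_N hKN0 W f_e f_f u_N p_M hp hVI hEq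
end

section
/- Let u ∈ K satisfy ⟨Du − l, v − u⟩_H ≥ 0 for all v ∈ K, and let u_N ∈ K_N satisfy ⟨D_M u_N − l_M, v_N − u_N⟩_H ≥ 0 for all v_N ∈ K_N. Then for all v ∈ K and all v_N ∈ K_N, ‖u − u_N‖_H² ≤ 18‖u − v_N‖_H² + 4⟨Du − l, (v_N − u) + (v − u_N)⟩_H + 4‖(D − D_M)v_N − (l − l_M)‖_H². -/
open scoped RealInnerProductSpace

/-!
Testing the continuous inequality with `v` and the discrete one with `v_N` bounds the error
`e = u - u_N` in the energy `⟪D_M e, e⟫ = ‖e‖² + ‖P B e‖²` by the best-approximation error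
`u - v_N`, the residual term, and the consistency error `D - D_M = B†(1 - P)B`. Since
`‖P B x‖² + ‖(1 - P) B x‖² = ‖B x‖² ≤ ‖x‖²`, Young's inequality closes the estimate.
-/

open ContinuousLinearMap InnerProduct

namespace Submodule

variable {𝕜 E : Type*} [RCLike 𝕜] [NormedAddCommGroup E] [InnerProductSpace 𝕜 E]
  (K : Submodule 𝕜 E) [K.HasOrthogonalProjection]

theorem inner_starProjection_left_eq_inner_starProjection (x y : E) :
    inner 𝕜 (K.starProjection x) y = inner 𝕜 (K.starProjection x) (K.starProjection y) := by
  rw [← inner_starProjection_left_eq_right,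
    starProjection_eq_self_iff.mpr (K.starProjection_apply_mem x)]

end Submodule

section Splitting

variable {H Q : Type*} [NormedAddCommGroup H] [InnerProductSpace ℝ H]
  [NormedAddCommGroup Q] [InnerProductSpace ℝ Q]
  (B : H →L[ℝ] Q) (W : Submodule ℝ Q) [W.HasOrthogonalProjection]

theorem inner_id_add_adjoint_comp_starProjection_comp [CompleteSpace H] [CompleteSpace Q]
    (x y : H) :
    ⟪(ContinuousLinearMap.id ℝ H + B† ∘L (W.starProjection ∘L B)) x, y⟫ =
      ⟪x, y⟫ + ⟪W.starProjection (B x), W.starProjection (B y)⟫ := by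
  rw [add_apply, inner_add_left, comp_apply, adjoint_inner_left, comp_apply,
    W.inner_starProjection_left_eq_inner_starProjection, id_apply]

theorem inner_adjoint_comp_sub_adjoint_comp_starProjection_comp [CompleteSpace H]
    [CompleteSpace Q] (x y : H) :
    ⟪(B† ∘L B - B† ∘L (W.starProjection ∘L B)) x, y⟫ =
      ⟪Wᗮ.starProjection (B x), Wᗮ.starProjection (B y)⟫ := by
  rw [sub_apply, comp_apply, comp_apply, comp_apply, ← map_sub, adjoint_inner_left,
    ← Submodule.starProjection_orthogonal_val,
    Wᗮ.inner_starProjection_left_eq_inner_starProjection]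

theorem norm_starProjection_sq_add_norm_starProjection_orthogonal_sq_le (hB : ‖B‖ ≤ 1) (x : H) :
    ‖W.starProjection (B x)‖ ^ 2 + ‖Wᗮ.starProjection (B x)‖ ^ 2 ≤ ‖x‖ ^ 2 := by
  rw [← W.norm_sq_eq_add_norm_sq_starProjection]
  have hBx : ‖B x‖ ≤ ‖x‖ := by simpa using B.le_of_opNorm_le hB x
  gcongr

end Splitting

theorem sq_le_of_energy_inequality {a b p q s c d T : ℝ} (hps : p ^ 2 + s ^ 2 ≤ a ^ 2)
    (hqc : q ^ 2 + c ^ 2 ≤ b ^ 2)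
    (h : a ^ 2 + p ^ 2 ≤ T + a * b + p * q + s * c + c ^ 2 + d * (a + b)) :
    a ^ 2 ≤ 18 * b ^ 2 + 4 * T + 4 * d ^ 2 := by
  nlinarith [sq_nonneg (a - 3 * b), sq_nonneg (2 * d - (a + b)), sq_nonneg (p - 2 * q),
    sq_nonneg (s - 2 * c), sq_nonneg p]

section StrangEstimate

variable {H F G : Type*} [NormedAddCommGroup H] [InnerProductSpace ℝ H]
  [NormedAddCommGroup F] [InnerProductSpace ℝ F] [NormedAddCommGroup G] [InnerProductSpace ℝ G]
  (D D_M : H →L[ℝ] H) (l l_M : H) {u u_N v v_N : H}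

theorem inner_error_le_of_variational_inequalities (hVI : 0 ≤ ⟪D u - l, v - u⟫)
    (hVIN : 0 ≤ ⟪D_M u_N - l_M, v_N - u_N⟫) :
    ⟪D_M (u - u_N), u - u_N⟫ ≤ ⟪D u - l, (v_N - u) + (v - u_N)⟫ +
      ⟪(D - D_M) u - (l - l_M), u_N - v_N⟫ + ⟪D_M (u - u_N), u - v_N⟫ := by
  simp only [map_sub, sub_apply, inner_sub_left, inner_sub_right, inner_add_right] at *
  linarith

theorem inner_consistency_error_le (S : H →L[ℝ] G)
    (hS : ∀ x y, ⟪(D - D_M) x, y⟫ = ⟪S x, S y⟫) :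
    ⟪(D - D_M) u - (l - l_M), u_N - v_N⟫ ≤
      ‖(D - D_M) v_N - (l - l_M)‖ * (‖u - u_N‖ + ‖u - v_N‖) +
        ‖S (u - v_N)‖ * (‖S (u - v_N)‖ + ‖S (u - u_N)‖) := by
  have hsplit : (D - D_M) u - (l - l_M) = ((D - D_M) v_N - (l - l_M)) + (D - D_M) (u - v_N) := by
    rw [map_sub]; abel
  have hdiff : u_N - v_N = (u - v_N) - (u - u_N) := by abel
  have hnorm : ‖u_N - v_N‖ ≤ ‖u - u_N‖ + ‖u - v_N‖ := by
    rw [hdiff, add_comm]; exact norm_sub_le _ _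
  have hSnorm : ‖S (u_N - v_N)‖ ≤ ‖S (u - v_N)‖ + ‖S (u - u_N)‖ := by
    rw [hdiff, map_sub]; exact norm_sub_le _ _
  rw [hsplit, inner_add_left, hS]
  calc _ ≤ ‖(D - D_M) v_N - (l - l_M)‖ * ‖u_N - v_N‖ + ‖S (u - v_N)‖ * ‖S (u_N - v_N)‖ :=
        add_le_add (real_inner_le_norm _ _) (real_inner_le_norm _ _)
    _ ≤ _ := by gcongr

theorem norm_sub_sq_le_of_variational_inequalities (R : H →L[ℝ] F) (S : H →L[ℝ] G)
    (hDM : ∀ x y, ⟪D_M x, y⟫ = ⟪x, y⟫ + ⟪R x, R y⟫)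
    (hS : ∀ x y, ⟪(D - D_M) x, y⟫ = ⟪S x, S y⟫)
    (hRS : ∀ x, ‖R x‖ ^ 2 + ‖S x‖ ^ 2 ≤ ‖x‖ ^ 2)
    (hVI : 0 ≤ ⟪D u - l, v - u⟫) (hVIN : 0 ≤ ⟪D_M u_N - l_M, v_N - u_N⟫) :
    ‖u - u_N‖ ^ 2 ≤ 18 * ‖u - v_N‖ ^ 2 + 4 * ⟪D u - l, (v_N - u) + (v - u_N)⟫ +
      4 * ‖(D - D_M) v_N - (l - l_M)‖ ^ 2 := by
  have henergy := inner_error_le_of_variational_inequalities D D_M l l_M hVI hVIN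
  have hcons := inner_consistency_error_le D D_M l l_M (u := u) (u_N := u_N) (v_N := v_N) S hS
  have hcross : ⟪D_M (u - u_N), u - v_N⟫ ≤
      ‖u - u_N‖ * ‖u - v_N‖ + ‖R (u - u_N)‖ * ‖R (u - v_N)‖ := by
    rw [hDM]; exact add_le_add (real_inner_le_norm _ _) (real_inner_le_norm _ _)
  rw [hDM, real_inner_self_eq_norm_sq, real_inner_self_eq_norm_sq] at henergy
  exact sq_le_of_energy_inequality (hRS _) (hRS _) (by linarith)

end StrangEstimate

theorem stmt_11_general {H Q : Type*}
    [NormedAddCommGroup H] [InnerProductSpace ℝ H] [CompleteSpace H]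
    [NormedAddCommGroup Q] [InnerProductSpace ℝ Q] [CompleteSpace Q]
    (B : H →L[ℝ] Q) (hB : ‖B‖ ≤ 1)
    (K : Set H)
    (K_N : Set H)
    (W : Submodule ℝ Q)
    (P : Q →L[ℝ] Q) (hP : ∀ x : Q, P x ∈ W ∧ x - P x ∈ Wᗮ)
    (D D_M : H →L[ℝ] H) (l l_M : H)
    (hD : D = ContinuousLinearMap.id ℝ H + (ContinuousLinearMap.adjoint B).comp B)
    (hDM : D_M = ContinuousLinearMap.id ℝ H + (ContinuousLinearMap.adjoint B).comp (P.comp B))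
    (u : H) (hVI : ∀ v ∈ K, ⟪D u - l, v - u⟫ ≥ 0)
    (u_N : H) (hVIN : ∀ v_N ∈ K_N, ⟪D_M u_N - l_M, v_N - u_N⟫ ≥ 0) :
    ∀ v ∈ K, ∀ v_N ∈ K_N,
      ‖u - u_N‖ ^ 2 ≤ 18 * ‖u - v_N‖ ^ 2 +
        4 * ⟪D u - l, (v_N - u) + (v - u_N)⟫ +
        4 * ‖(D - D_M) v_N - (l - l_M)‖ ^ 2 := by
  intro v hv v_N hvN
  have : W.HasOrthogonalProjection := ⟨fun x => ⟨P x, hP x⟩⟩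
  obtain rfl : P = W.starProjection :=
    ext fun x => (Submodule.eq_starProjection_of_mem_orthogonal (hP x).1 (hP x).2).symm
  subst hD hDM
  refine norm_sub_sq_le_of_variational_inequalities _ _ l l_M (W.starProjection ∘L B)
    (Wᗮ.starProjection ∘L B) (inner_id_add_adjoint_comp_starProjection_comp B W) (fun x y => ?_)
    (norm_starProjection_sq_add_norm_starProjection_orthogonal_sq_le B W hB) (hVI v hv)
    (hVIN v_N hvN)
  rw [add_sub_add_left_eq_sub]
  exact inner_adjoint_comp_sub_adjoint_comp_starProjection_comp B W x y

/-- Strang–Falk type a priori estimate for the reduced variational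
inequalities: `‖u − u_N‖² ≤ 18‖u − v_N‖² + 4⟨Du − l, (v_N − u) + (v − u_N)⟩
+ 4‖(D − D_M)v_N − (l − l_M)‖²` for all `v ∈ K`, `v_N ∈ K_N`. -/
theorem stmt_11 {H Q : Type*}
    [NormedAddCommGroup H] [InnerProductSpace ℝ H] [CompleteSpace H]
    [NormedAddCommGroup Q] [InnerProductSpace ℝ Q] [CompleteSpace Q]
    (B : H →L[ℝ] Q) (hB : ‖B‖ ≤ 1)
    (f_e : H) (f_f : Q)
    (K : Set H) (hK_ne : K.Nonempty) (hK_cl : IsClosed K) (hK_cv : Convex ℝ K)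
    (V_N : Submodule ℝ H) (hVN : FiniteDimensional ℝ V_N)
    (K_N : Set H) (hKN_sub : K_N ⊆ (V_N : Set H))
    (hKN_ne : K_N.Nonempty) (hKN_cl : IsClosed K_N) (hKN_cv : Convex ℝ K_N)
    (W : Submodule ℝ Q) (hW : FiniteDimensional ℝ W)
    (P : Q →L[ℝ] Q) (hP : ∀ x : Q, P x ∈ W ∧ x - P x ∈ Wᗮ)
    (D D_M : H →L[ℝ] H) (l l_M : H)
    (hD : D = ContinuousLinearMap.id ℝ H + (ContinuousLinearMap.adjoint B).comp B)
    (hDM : D_M = ContinuousLinearMap.id ℝ H + (ContinuousLinearMap.adjoint B).comp (P.comp B))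
    (hl : l = f_e - ContinuousLinearMap.adjoint B f_f)
    (hlM : l_M = f_e - ContinuousLinearMap.adjoint B (P f_f))
    (u : H) (hu : u ∈ K) (hVI : ∀ v ∈ K, ⟪D u - l, v - u⟫ ≥ 0)
    (u_N : H) (huN : u_N ∈ K_N) (hVIN : ∀ v_N ∈ K_N, ⟪D_M u_N - l_M, v_N - u_N⟫ ≥ 0) :
    ∀ v ∈ K, ∀ v_N ∈ K_N,
      ‖u - u_N‖ ^ 2 ≤ 18 * ‖u - v_N‖ ^ 2 +
        4 * ⟪D u - l, (v_N - u) + (v - u_N)⟫ +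
        4 * ‖(D - D_M) v_N - (l - l_M)‖ ^ 2 :=
  stmt_11_general B hB K K_N W P hP D D_M l l_M hD hDM u hVI u_N hVIN
end

section
/- Let u ∈ H and set p = −(Bu + f_f) ∈ Q. Then for every v_N ∈ H, 4‖(D − D_M)v_N − (l − l_M)‖_H² ≤ 24‖u − v_N‖_H² + 12·inf_{q ∈ W} ‖p − q‖_Q². -/
/-!
Expanding the definitions, the residual `(D - D_M) v - (l - l_M)` is `B† (I - P)(B v + f_f)`, and
`B v + f_f = B (v - u) - p`. Since `‖B†‖ = ‖B‖ ≤ 1` and `I - P` is a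
contraction, its norm is at most `‖u - v‖ + ‖p - P p‖`, and `‖p - P p‖` is the distance from `p`
to `W` by Pythagoras. The constants then come from `4 (a + b)² ≤ 8 a² + 8 b²`.
-/

section OrthogonalDecomposition

variable {E : Type*} [NormedAddCommGroup E] [InnerProductSpace ℝ E] {K : Submodule ℝ E}
  {x y : E}

theorem norm_sub_mul_self_eq_of_sub_mem_orthogonal (hy : y ∈ K) (hxy : x - y ∈ Kᗮ) {q : E}
    (hq : q ∈ K) :
    ‖x - q‖ * ‖x - q‖ = ‖x - y‖ * ‖x - y‖ + ‖y - q‖ * ‖y - q‖ := by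
  rw [← sub_add_sub_cancel x y q]
  exact norm_add_sq_eq_norm_sq_add_norm_sq_real
    (Submodule.inner_left_of_mem_orthogonal (K.sub_mem hy hq) hxy)

theorem norm_sub_le_norm_sub_of_sub_mem_orthogonal (hy : y ∈ K) (hxy : x - y ∈ Kᗮ) {q : E}
    (hq : q ∈ K) : ‖x - y‖ ≤ ‖x - q‖ := by
  have := norm_sub_mul_self_eq_of_sub_mem_orthogonal hy hxy hq
  nlinarith [mul_self_nonneg ‖y - q‖, norm_nonneg (x - y), norm_nonneg (x - q)]

theorem norm_sub_le_norm_of_sub_mem_orthogonal (hy : y ∈ K) (hxy : x - y ∈ Kᗮ) :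
    ‖x - y‖ ≤ ‖x‖ := by
  simpa using norm_sub_le_norm_sub_of_sub_mem_orthogonal hy hxy K.zero_mem

theorem sq_norm_sub_le_iInf_of_sub_mem_orthogonal (hy : y ∈ K) (hxy : x - y ∈ Kᗮ) :
    ‖x - y‖ ^ 2 ≤ ⨅ q : K, ‖x - (q : E)‖ ^ 2 :=
  le_ciInf fun q => pow_le_pow_left₀ (norm_nonneg _)
    (norm_sub_le_norm_sub_of_sub_mem_orthogonal hy hxy q.2) 2

end OrthogonalDecomposition

section Residual

variable {H Q : Type*} [NormedAddCommGroup H] [InnerProductSpace ℝ H] [CompleteSpace H]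
  [NormedAddCommGroup Q] [InnerProductSpace ℝ Q] [CompleteSpace Q]

open ContinuousLinearMap in
theorem residual_eq_adjoint_apply_sub (B : H →L[ℝ] Q) (P : Q →L[ℝ] Q) (f_e v : H)
    (f_f : Q) :
    ((ContinuousLinearMap.id ℝ H + (adjoint B).comp B)
        - (ContinuousLinearMap.id ℝ H + (adjoint B).comp (P.comp B))) v
        - ((f_e - adjoint B f_f) - (f_e - adjoint B (P f_f)))
      = adjoint B ((B v + f_f) - P (B v + f_f)) := by
  simp only [sub_apply, add_apply, coe_id', id_eq, comp_apply, map_add, map_sub]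
  abel

end Residual

theorem four_mul_sq_le_of_le_add {t a b : ℝ} (ht : 0 ≤ t) (h : t ≤ a + b) :
    4 * t ^ 2 ≤ 24 * a ^ 2 + 12 * b ^ 2 := by
  nlinarith [sq_nonneg (a - b)]

theorem stmt_13_general {H Q : Type*}
    [NormedAddCommGroup H] [InnerProductSpace ℝ H] [CompleteSpace H]
    [NormedAddCommGroup Q] [InnerProductSpace ℝ Q] [CompleteSpace Q]
    (B : H →L[ℝ] Q) (hB : ‖B‖ ≤ 1)
    (f_e : H) (f_f : Q)
    (W : Submodule ℝ Q)
    (P : Q →L[ℝ] Q) (hP : ∀ x : Q, P x ∈ W ∧ x - P x ∈ Wᗮ)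
    (D D_M : H →L[ℝ] H) (l l_M : H)
    (hD : D = ContinuousLinearMap.id ℝ H + (ContinuousLinearMap.adjoint B).comp B)
    (hDM : D_M = ContinuousLinearMap.id ℝ H + (ContinuousLinearMap.adjoint B).comp (P.comp B))
    (hl : l = f_e - ContinuousLinearMap.adjoint B f_f)
    (hlM : l_M = f_e - ContinuousLinearMap.adjoint B (P f_f))
    (u : H) (p : Q) (hp : p = -(B u + f_f)) :
    ∀ v_N : H,
      4 * ‖(D - D_M) v_N - (l - l_M)‖ ^ 2 ≤
        24 * ‖u - v_N‖ ^ 2 + 12 * ⨅ q : W, ‖p - (q : Q)‖ ^ 2 := by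
  intro v_N
  have hBadj : ‖ContinuousLinearMap.adjoint B‖ ≤ 1 := by
    rwa [(ContinuousLinearMap.adjoint : (H →L[ℝ] Q) ≃ₗᵢ⋆[ℝ] _).norm_map]
  have hsplit : (B v_N + f_f) - P (B v_N + f_f)
      = (B (v_N - u) - P (B (v_N - u))) - (p - P p) := by
    rw [hp]; simp only [map_sub, map_add, map_neg]; abel
  have hbound : ‖(D - D_M) v_N - (l - l_M)‖ ≤ ‖u - v_N‖ + ‖p - P p‖ := by
    rw [hD, hDM, hl, hlM, residual_eq_adjoint_apply_sub]
    calc _ ≤ 1 * ‖(B v_N + f_f) - P (B v_N + f_f)‖ :=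
          (ContinuousLinearMap.adjoint B).le_of_opNorm_le hBadj _
      _ ≤ ‖B (v_N - u) - P (B (v_N - u))‖ + ‖p - P p‖ := by
          rw [one_mul, hsplit]; exact norm_sub_le _ _
      _ ≤ ‖B (v_N - u)‖ + ‖p - P p‖ := by
          gcongr; exact norm_sub_le_norm_of_sub_mem_orthogonal (hP _).1 (hP _).2
      _ ≤ ‖u - v_N‖ + ‖p - P p‖ := by
          gcongr; simpa [norm_sub_rev] using B.le_of_opNorm_le hB (v_N - u)
  exact (four_mul_sq_le_of_le_add (norm_nonneg _) hbound).trans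
    (by gcongr; exact sq_norm_sub_le_iInf_of_sub_mem_orthogonal (hP p).1 (hP p).2)

/-- Consistency-error estimate: with `p = −(Bu + f_f)`,
`4‖(D − D_M)v_N − (l − l_M)‖² ≤ 24‖u − v_N‖² + 12·inf_{q ∈ W}‖p − q‖²`. -/
theorem stmt_13 {H Q : Type*}
    [NormedAddCommGroup H] [InnerProductSpace ℝ H] [CompleteSpace H]
    [NormedAddCommGroup Q] [InnerProductSpace ℝ Q] [CompleteSpace Q]
    (B : H →L[ℝ] Q) (hB : ‖B‖ ≤ 1)
    (f_e : H) (f_f : Q)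
    (W : Submodule ℝ Q) (hW_cl : IsClosed (W : Set Q))
    (P : Q →L[ℝ] Q) (hP : ∀ x : Q, P x ∈ W ∧ x - P x ∈ Wᗮ)
    (D D_M : H →L[ℝ] H) (l l_M : H)
    (hD : D = ContinuousLinearMap.id ℝ H + (ContinuousLinearMap.adjoint B).comp B)
    (hDM : D_M = ContinuousLinearMap.id ℝ H + (ContinuousLinearMap.adjoint B).comp (P.comp B))
    (hl : l = f_e - ContinuousLinearMap.adjoint B f_f)
    (hlM : l_M = f_e - ContinuousLinearMap.adjoint B (P f_f))
    (u : H) (p : Q) (hp : p = -(B u + f_f)) :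
    ∀ v_N : H,
      4 * ‖(D - D_M) v_N - (l - l_M)‖ ^ 2 ≤
        24 * ‖u - v_N‖ ^ 2 + 12 * ⨅ q : W, ‖p - (q : Q)‖ ^ 2 :=
  stmt_13_general B hB f_e f_f W P hP D D_M l l_M hD hDM hl hlM u p hp
end

section
/- Let (u,p) ∈ K × Q solve the continuous Biot contact problem and let (u_N, p_M) ∈ K_N × W solve the discrete Biot contact problem. Then for all v ∈ K, all v_N ∈ K_N and all q_M ∈ W, ‖u − u_N‖_H² ≤ 42‖u − v_N‖_H² + 12‖p − q_M‖_Q² + 4⟨Du − l, (v_N − u) + (v − u_N)⟩_H, where D = id_H + B†∘B and l = f_e − B† f_f. (The last term equals the contact-pressure duality term ⟨σ_n(u,p), (v_N − u + v − u_N)·n⟩ on the contact boundary in the concrete Biot setting.) -/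
/-!
Testing the two variational inequalities with `v` and `v_N` gives a Falk-type bound: the
squared error is controlled by a best-approximation term, the consistency term
`⟪Du - l, (v_N - u) + (v - u_N)⟫` (because the continuous pressure equation identifies
`Du - l` with the residual `u - f_e - B†p`), and the pressure coupling
`⟪p - p_M, B (v_N - u_N)⟫`. Galerkin orthogonality of the pressure equation on `W` turns the
coupling into a negative term `-‖q_M - p_M‖²` plus cross terms, and Young's inequality absorbs
everything into `‖u - u_N‖²`.
-/

open scoped RealInnerProductSpace

open ContinuousLinearMap

section

variable {H Q : Type*} [NormedAddCommGroup H] [InnerProductSpace ℝ H]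
  [NormedAddCommGroup Q] [InnerProductSpace ℝ Q]

theorem norm_sub_sq_le_of_variational_inequalities_s14 {u u_N g g_N v v_N : H}
    (hVI : 0 ≤ ⟪u - g, v - u⟫) (hVIN : 0 ≤ ⟪u_N - g_N, v_N - u_N⟫) :
    ‖u - u_N‖ ^ 2 ≤
      ⟪u - u_N, u - v_N⟫ + ⟪g - g_N, v_N - u_N⟫ + ⟪u - g, (v_N - u) + (v - u_N)⟫ := by
  have key : ‖u - u_N‖ ^ 2 + ⟪u - g, v - u⟫ + ⟪u_N - g_N, v_N - u_N⟫ =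
      ⟪u - u_N, u - v_N⟫ + ⟪g - g_N, v_N - u_N⟫ + ⟪u - g, (v_N - u) + (v - u_N)⟫ := by
    rw [← real_inner_self_eq_norm_sq]
    simp only [inner_sub_left, inner_sub_right, inner_add_right, real_inner_comm u]
    ring
  linarith

theorem inner_pressure_coupling_le (B : H →L[ℝ] Q) (hB : ‖B‖ ≤ 1)
    {u u_N v_N : H} {p p_M q_M : Q}
    (horth : ⟪B (u - u_N), q_M - p_M⟫ = ⟪p_M - p, q_M - p_M⟫) :
    ⟪p - p_M, B (v_N - u_N)⟫ ≤
      ‖p - q_M‖ * (‖u - v_N‖ + ‖u - u_N‖) + (‖u - v_N‖ + ‖p - q_M‖) ^ 2 / 4 := by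
  have hBx (x : H) : ‖B x‖ ≤ ‖x‖ := by simpa using B.le_of_opNorm_le hB x
  have hsplit : ⟪p - p_M, B (v_N - u_N)⟫ = ⟪p - q_M, B (v_N - u_N)⟫ +
      ⟪q_M - p_M, B (v_N - u)⟫ - ⟪p - q_M, q_M - p_M⟫ - ‖q_M - p_M‖ ^ 2 := by
    rw [← real_inner_self_eq_norm_sq]
    rw [real_inner_comm] at horth
    simp only [map_sub, inner_sub_left, inner_sub_right] at horth ⊢
    linarith [real_inner_comm p_M q_M, real_inner_comm p q_M]
  set r := q_M - p_M
  have h₁ : ⟪p - q_M, B (v_N - u_N)⟫ ≤ ‖p - q_M‖ * (‖u - v_N‖ + ‖u - u_N‖) := by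
    refine (real_inner_le_norm _ _).trans (mul_le_mul_of_nonneg_left ?_ (norm_nonneg _))
    calc ‖B (v_N - u_N)‖ ≤ ‖v_N - u_N‖ := hBx _
      _ ≤ ‖v_N - u‖ + ‖u - u_N‖ := norm_sub_le_norm_sub_add_norm_sub _ _ _
      _ = ‖u - v_N‖ + ‖u - u_N‖ := by rw [norm_sub_rev]
  have h₂ : ⟪r, B (v_N - u)⟫ ≤ ‖r‖ * ‖u - v_N‖ :=
    (real_inner_le_norm _ _).trans
      (mul_le_mul_of_nonneg_left ((hBx _).trans (norm_sub_rev _ _).le) (norm_nonneg _))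
  have h₃ : -⟪p - q_M, r⟫ ≤ ‖p - q_M‖ * ‖r‖ := (neg_le_abs _).trans (abs_real_inner_le_norm _ _)
  nlinarith [sq_nonneg (‖r‖ - (‖u - v_N‖ + ‖p - q_M‖) / 2)]

theorem eq_neg_sub_of_forall_inner (B : H →L[ℝ] Q) {u : H} {p f : Q}
    (h : ∀ q, -⟪B u, q⟫ - ⟪p, q⟫ = ⟪f, q⟫) : p = -B u - f :=
  ext_inner_right ℝ fun q => by
    rw [inner_sub_left, inner_neg_left]
    linarith [h q]

theorem inner_residual_nonneg [CompleteSpace H] [CompleteSpace Q] (B : H →L[ℝ] Q)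
    {x f w : H} {p : Q} (h : ⟪f, w⟫ ≤ ⟪x, w⟫ - ⟪p, B w⟫) :
    0 ≤ ⟪x - (f + adjoint B p), w⟫ := by
  rw [inner_sub_left, inner_add_left, adjoint_inner_left]
  linarith

end

theorem stmt_14_general {H Q : Type*}
    [NormedAddCommGroup H] [InnerProductSpace ℝ H] [CompleteSpace H]
    [NormedAddCommGroup Q] [InnerProductSpace ℝ Q] [CompleteSpace Q]
    (B : H →L[ℝ] Q) (hB : ‖B‖ ≤ 1)
    (K : Set H) (K_N : Set H)
    (W : Submodule ℝ Q)
    (f_e : H) (f_f : Q)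
    (D : H →L[ℝ] H) (l : H)
    (hD : D = ContinuousLinearMap.id ℝ H + (ContinuousLinearMap.adjoint B).comp B)
    (hl : l = f_e - ContinuousLinearMap.adjoint B f_f)
    (u : H) (p : Q)
    (hVI : ∀ v ∈ K, ⟪u, v - u⟫ - ⟪p, B (v - u)⟫ ≥ ⟪f_e, v - u⟫)
    (hEq : ∀ q : Q, -⟪B u, q⟫ - ⟪p, q⟫ = ⟪f_f, q⟫)
    (u_N : H) (p_M : Q) (hpM : p_M ∈ W)
    (hVIN : ∀ v_N ∈ K_N, ⟪u_N, v_N - u_N⟫ - ⟪p_M, B (v_N - u_N)⟫ ≥ ⟪f_e, v_N - u_N⟫)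
    (hEqN : ∀ q ∈ W, -⟪B u_N, q⟫ - ⟪p_M, q⟫ = ⟪f_f, q⟫) :
    ∀ v ∈ K, ∀ v_N ∈ K_N, ∀ q_M ∈ W,
      ‖u - u_N‖ ^ 2 ≤ 42 * ‖u - v_N‖ ^ 2 + 12 * ‖p - q_M‖ ^ 2 +
        4 * ⟪D u - l, (v_N - u) + (v - u_N)⟫ := by
  intro v hv v_N hvN q_M hqM
  have hres : D u - l = u - (f_e + adjoint B p) := by
    rw [hD, hl, eq_neg_sub_of_forall_inner B hEq]
    simp only [add_apply, comp_apply, id_apply, map_sub, map_neg]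
    abel
  have hcoupling : ⟪(f_e + adjoint B p) - (f_e + adjoint B p_M), v_N - u_N⟫ =
      ⟪p - p_M, B (v_N - u_N)⟫ := by
    rw [add_sub_add_left_eq_sub, ← map_sub, adjoint_inner_left]
  have horth : ⟪B (u - u_N), q_M - p_M⟫ = ⟪p_M - p, q_M - p_M⟫ := by
    have hN := hEqN _ (W.sub_mem hqM hpM)
    have hC := hEq (q_M - p_M)
    rw [map_sub, inner_sub_left, inner_sub_left]
    linarith
  have hfalk := norm_sub_sq_le_of_variational_inequalities_s14
    (inner_residual_nonneg B (hVI v hv)) (inner_residual_nonneg B (hVIN v_N hvN))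
  rw [hcoupling, ← hres] at hfalk
  have hpress := inner_pressure_coupling_le B hB (v_N := v_N) horth
  have hbest : ⟪u - u_N, u - v_N⟫ ≤ ‖u - u_N‖ * ‖u - v_N‖ := real_inner_le_norm _ _
  nlinarith [sq_nonneg (‖u - u_N‖ - 2 * ‖u - v_N‖), sq_nonneg (‖u - u_N‖ - 2 * ‖p - q_M‖),
    sq_nonneg (‖u - v_N‖ - ‖p - q_M‖), sq_nonneg ‖u - u_N‖]

/-- A priori error estimate for the displacement:
`‖u − u_N‖² ≤ 42‖u − v_N‖² + 12‖p − q_M‖² + 4⟨Du − l, (v_N − u) + (v − u_N)⟩`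
for all `v ∈ K`, `v_N ∈ K_N`, `q_M ∈ W`, with `D = id + B†∘B`, `l = f_e − B† f_f`. -/
theorem stmt_14 {H Q : Type*}
    [NormedAddCommGroup H] [InnerProductSpace ℝ H] [CompleteSpace H]
    [NormedAddCommGroup Q] [InnerProductSpace ℝ Q] [CompleteSpace Q]
    (B : H →L[ℝ] Q) (hB : ‖B‖ ≤ 1)
    (K : Set H) (hK_ne : K.Nonempty) (hK_cl : IsClosed K) (hK_cv : Convex ℝ K)
    (V_N : Submodule ℝ H) (hVN : FiniteDimensional ℝ V_N)
    (K_N : Set H) (hKN_sub : K_N ⊆ (V_N : Set H))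
    (hKN_ne : K_N.Nonempty) (hKN_cl : IsClosed K_N) (hKN_cv : Convex ℝ K_N)
    (W : Submodule ℝ Q) (hW : FiniteDimensional ℝ W)
    (f_e : H) (f_f : Q)
    (D : H →L[ℝ] H) (l : H)
    (hD : D = ContinuousLinearMap.id ℝ H + (ContinuousLinearMap.adjoint B).comp B)
    (hl : l = f_e - ContinuousLinearMap.adjoint B f_f)
    (u : H) (p : Q) (hu : u ∈ K)
    (hVI : ∀ v ∈ K, ⟪u, v - u⟫ - ⟪p, B (v - u)⟫ ≥ ⟪f_e, v - u⟫)
    (hEq : ∀ q : Q, -⟪B u, q⟫ - ⟪p, q⟫ = ⟪f_f, q⟫)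
    (u_N : H) (p_M : Q) (huN : u_N ∈ K_N) (hpM : p_M ∈ W)
    (hVIN : ∀ v_N ∈ K_N, ⟪u_N, v_N - u_N⟫ - ⟪p_M, B (v_N - u_N)⟫ ≥ ⟪f_e, v_N - u_N⟫)
    (hEqN : ∀ q ∈ W, -⟪B u_N, q⟫ - ⟪p_M, q⟫ = ⟪f_f, q⟫) :
    ∀ v ∈ K, ∀ v_N ∈ K_N, ∀ q_M ∈ W,
      ‖u - u_N‖ ^ 2 ≤ 42 * ‖u - v_N‖ ^ 2 + 12 * ‖p - q_M‖ ^ 2 +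
        4 * ⟪D u - l, (v_N - u) + (v - u_N)⟫ :=
  stmt_14_general B hB K K_N W f_e f_f D l hD hl u p hVI hEq u_N p_M hpM hVIN hEqN
end

section
/- Let (u,p) ∈ K × Q solve the continuous Biot contact problem and let (u_N, p_M) ∈ K_N × W solve the discrete Biot contact problem. Then for all v ∈ K, all v_N ∈ K_N and all q_M ∈ W, ‖p − p_M‖_Q² ≤ 126‖u − v_N‖_H² + 39‖p − q_M‖_Q² + 12⟨Du − l, (v_N − u) + (v − u_N)⟩_H, where D = id_H + B†∘B and l = f_e − B† f_f. -/
open scoped RealInnerProductSpace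

/-!
The pressure equation identifies `D u - l` with the residual `r = u - B†p - f_e` of the
displacement inequality. Testing the discrete inequality with `v_N` and using Galerkin
orthogonality `⟪B(u - u_N) + (p - p_M), q⟫ = 0` on `W` gives the energy bound
`‖u - u_N‖² + ‖p - p_M‖² ≤ (‖u - u_N‖ + ‖p - p_M‖)(‖u - v_N‖ + ‖p - q_M‖) + ⟪r, v_N - u_N⟫`,
and `⟪r, v - u⟫ ≥ 0` by the continuous inequality. Young's inequality absorbs the error norms
on the right-hand side.
-/

section

open ContinuousLinearMap

variable {H Q : Type*}
  [NormedAddCommGroup H] [InnerProductSpace ℝ H] [NormedAddCommGroup Q] [InnerProductSpace ℝ Q]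
  {B : H →L[ℝ] Q}

theorem inner_galerkin_orthogonal {u u_N : H} {p p_M f_f : Q} {W : Submodule ℝ Q}
    (hEq : ∀ q : Q, -⟪B u, q⟫ - ⟪p, q⟫ = ⟪f_f, q⟫)
    (hEqN : ∀ q ∈ W, -⟪B u_N, q⟫ - ⟪p_M, q⟫ = ⟪f_f, q⟫) {q : Q} (hq : q ∈ W) :
    ⟪B (u - u_N) + (p - p_M), q⟫ = 0 := by
  rw [inner_add_left, map_sub, inner_sub_left, inner_sub_left]
  linarith [hEq q, hEqN q hq]

theorem eq_neg_of_pressure_eq {u : H} {p f_f : Q}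
    (hEq : ∀ q : Q, -⟪B u, q⟫ - ⟪p, q⟫ = ⟪f_f, q⟫) : p = -(B u + f_f) :=
  ext_inner_right ℝ fun q => by
    rw [inner_neg_left, inner_add_left]
    linarith [hEq q]

theorem inner_add_sq_norm_le (hB : ‖B‖ ≤ 1) {u u_N v_N : H} {p p_M q_M : Q}
    (horth : ⟪B (u - u_N) + (p - p_M), q_M - p_M⟫ = 0) :
    ⟪p - p_M, B (v_N - u_N)⟫ + ‖p - p_M‖ ^ 2 ≤
      ‖p - p_M‖ * ‖u - v_N‖ + (‖u - u_N‖ + ‖p - p_M‖) * ‖p - q_M‖ := by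
  have hsplit : ⟪p - p_M, B (v_N - u_N)⟫ + ‖p - p_M‖ ^ 2 =
      ⟪p - p_M, B (v_N - u)⟫ + ⟪B (u - u_N) + (p - p_M), p - p_M⟫ := by
    rw [← sub_add_sub_cancel v_N u u_N, map_add, inner_add_right, inner_add_left,
      real_inner_self_eq_norm_sq, real_inner_comm (p - p_M) (B (u - u_N))]
    ring
  have hshift : ⟪B (u - u_N) + (p - p_M), p - p_M⟫ = ⟪B (u - u_N) + (p - p_M), p - q_M⟫ := by
    calc ⟪B (u - u_N) + (p - p_M), p - p_M⟫
        = ⟪B (u - u_N) + (p - p_M), (p - q_M) + (q_M - p_M)⟫ := by rw [sub_add_sub_cancel]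
      _ = ⟪B (u - u_N) + (p - p_M), p - q_M⟫ := by rw [inner_add_right, horth, add_zero]
  have hBv : ‖B (v_N - u)‖ ≤ ‖u - v_N‖ := by
    simpa [norm_sub_rev] using B.le_of_opNorm_le hB (v_N - u)
  have hBe : ‖B (u - u_N)‖ ≤ ‖u - u_N‖ := by
    simpa using B.le_of_opNorm_le hB (u - u_N)
  have h₁ : ⟪p - p_M, B (v_N - u)⟫ ≤ ‖p - p_M‖ * ‖u - v_N‖ :=
    (real_inner_le_norm _ _).trans (mul_le_mul_of_nonneg_left hBv (norm_nonneg _))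
  have h₂ : ⟪B (u - u_N) + (p - p_M), p - q_M⟫ ≤ (‖u - u_N‖ + ‖p - p_M‖) * ‖p - q_M‖ :=
    (real_inner_le_norm _ _).trans <| mul_le_mul_of_nonneg_right
      ((norm_add_le _ _).trans (by gcongr)) (norm_nonneg _)
  linarith

variable [CompleteSpace H] [CompleteSpace Q]

theorem inner_sub_adjoint_sub (x f w : H) (q : Q) :
    ⟪x - adjoint B q - f, w⟫ = ⟪x, w⟫ - ⟪q, B w⟫ - ⟪f, w⟫ := by
  rw [inner_sub_left, inner_sub_left, adjoint_inner_left]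

theorem biot_residual_eq {u f_e : H} {p f_f : Q} (hp : p = -(B u + f_f)) :
    (ContinuousLinearMap.id ℝ H + (adjoint B).comp B) u - (f_e - adjoint B f_f) =
      u - adjoint B p - f_e := by
  rw [hp, add_apply, id_apply, comp_apply, map_neg, map_add]
  abel

theorem sq_norm_sub_le_of_inner_nonneg (f : H) {u u_N v_N : H} {p p_M : Q}
    (hVIN : 0 ≤ ⟪u_N - adjoint B p_M - f, v_N - u_N⟫) :
    ‖u - u_N‖ ^ 2 ≤ ‖u - u_N‖ * ‖u - v_N‖ + ⟪u - adjoint B p - f, v_N - u_N⟫ +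
      ⟪p - p_M, B (v_N - u_N)⟫ := by
  have hsplit : ‖u - u_N‖ ^ 2 = ⟪u - u_N, u - v_N⟫ + ⟪u - u_N, v_N - u_N⟫ := by
    rw [← inner_add_right, ← real_inner_self_eq_norm_sq]
    congr 1
    abel
  have hres : ⟪u - u_N, v_N - u_N⟫ = ⟪u - adjoint B p - f, v_N - u_N⟫ -
      ⟪u_N - adjoint B p_M - f, v_N - u_N⟫ + ⟪p - p_M, B (v_N - u_N)⟫ := by
    rw [inner_sub_adjoint_sub, inner_sub_adjoint_sub, inner_sub_left, inner_sub_left]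
    ring
  linarith [real_inner_le_norm (u - u_N) (u - v_N)]

theorem galerkin_energy_bound (hB : ‖B‖ ≤ 1) (f : H) {u u_N v_N : H} {p p_M q_M : Q}
    (hVIN : 0 ≤ ⟪u_N - adjoint B p_M - f, v_N - u_N⟫)
    (horth : ⟪B (u - u_N) + (p - p_M), q_M - p_M⟫ = 0) :
    ‖u - u_N‖ ^ 2 + ‖p - p_M‖ ^ 2 ≤
      (‖u - u_N‖ + ‖p - p_M‖) * (‖u - v_N‖ + ‖p - q_M‖) +
        ⟪u - adjoint B p - f, v_N - u_N⟫ := by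
  linarith [sq_norm_sub_le_of_inner_nonneg (u := u) (p := p) f hVIN,
    inner_add_sq_norm_le (v_N := v_N) hB horth]

end

theorem sq_le_of_sq_add_sq_le {a b x y T : ℝ}
    (h : a ^ 2 + b ^ 2 ≤ (a + b) * (x + y) + T) :
    b ^ 2 ≤ 126 * x ^ 2 + 39 * y ^ 2 + 12 * T := by
  nlinarith [sq_nonneg (a - x), sq_nonneg (a - y),
    sq_nonneg (11 * b - 12 * x), sq_nonneg (11 * b - 12 * y)]

theorem stmt_15_general {H Q : Type*}
    [NormedAddCommGroup H] [InnerProductSpace ℝ H] [CompleteSpace H]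
    [NormedAddCommGroup Q] [InnerProductSpace ℝ Q] [CompleteSpace Q]
    (B : H →L[ℝ] Q) (hB : ‖B‖ ≤ 1)
    (K : Set H)
    (K_N : Set H)
    (W : Submodule ℝ Q)
    (f_e : H) (f_f : Q)
    (D : H →L[ℝ] H) (l : H)
    (hD : D = ContinuousLinearMap.id ℝ H + (ContinuousLinearMap.adjoint B).comp B)
    (hl : l = f_e - ContinuousLinearMap.adjoint B f_f)
    (u : H) (p : Q)
    (hVI : ∀ v ∈ K, ⟪u, v - u⟫ - ⟪p, B (v - u)⟫ ≥ ⟪f_e, v - u⟫)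
    (hEq : ∀ q : Q, -⟪B u, q⟫ - ⟪p, q⟫ = ⟪f_f, q⟫)
    (u_N : H) (p_M : Q) (hpM : p_M ∈ W)
    (hVIN : ∀ v_N ∈ K_N, ⟪u_N, v_N - u_N⟫ - ⟪p_M, B (v_N - u_N)⟫ ≥ ⟪f_e, v_N - u_N⟫)
    (hEqN : ∀ q ∈ W, -⟪B u_N, q⟫ - ⟪p_M, q⟫ = ⟪f_f, q⟫) :
    ∀ v ∈ K, ∀ v_N ∈ K_N, ∀ q_M ∈ W,
      ‖p - p_M‖ ^ 2 ≤ 126 * ‖u - v_N‖ ^ 2 + 39 * ‖p - q_M‖ ^ 2 +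
        12 * ⟪D u - l, (v_N - u) + (v - u_N)⟫ := by
  intro v hv v_N hvN q_M hqM
  have hres : D u - l = u - ContinuousLinearMap.adjoint B p - f_e := by
    rw [hD, hl]
    exact biot_residual_eq (eq_neg_of_pressure_eq hEq)
  have hcons : 0 ≤ ⟪D u - l, v - u⟫ := by
    rw [hres, inner_sub_adjoint_sub]
    linarith [hVI v hv]
  have hdisc : 0 ≤ ⟪u_N - ContinuousLinearMap.adjoint B p_M - f_e, v_N - u_N⟫ := by
    rw [inner_sub_adjoint_sub]
    linarith [hVIN v_N hvN]
  have horth := inner_galerkin_orthogonal hEq hEqN (W.sub_mem hqM hpM)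
  have henergy := galerkin_energy_bound hB f_e hdisc horth
  rw [← hres] at henergy
  refine sq_le_of_sq_add_sq_le (a := ‖u - u_N‖) ?_
  rw [show (v_N - u) + (v - u_N) = (v_N - u_N) + (v - u) by abel, inner_add_right]
  linarith

/-- A priori error estimate for the pressure:
`‖p − p_M‖² ≤ 126‖u − v_N‖² + 39‖p − q_M‖² + 12⟨Du − l, (v_N − u) + (v − u_N)⟩`
for all `v ∈ K`, `v_N ∈ K_N`, `q_M ∈ W`, with `D = id + B†∘B`, `l = f_e − B† f_f`. -/
theorem stmt_15 {H Q : Type*}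
    [NormedAddCommGroup H] [InnerProductSpace ℝ H] [CompleteSpace H]
    [NormedAddCommGroup Q] [InnerProductSpace ℝ Q] [CompleteSpace Q]
    (B : H →L[ℝ] Q) (hB : ‖B‖ ≤ 1)
    (K : Set H) (hK_ne : K.Nonempty) (hK_cl : IsClosed K) (hK_cv : Convex ℝ K)
    (V_N : Submodule ℝ H) (hVN : FiniteDimensional ℝ V_N)
    (K_N : Set H) (hKN_sub : K_N ⊆ (V_N : Set H))
    (hKN_ne : K_N.Nonempty) (hKN_cl : IsClosed K_N) (hKN_cv : Convex ℝ K_N)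
    (W : Submodule ℝ Q) (hW : FiniteDimensional ℝ W)
    (f_e : H) (f_f : Q)
    (D : H →L[ℝ] H) (l : H)
    (hD : D = ContinuousLinearMap.id ℝ H + (ContinuousLinearMap.adjoint B).comp B)
    (hl : l = f_e - ContinuousLinearMap.adjoint B f_f)
    (u : H) (p : Q) (hu : u ∈ K)
    (hVI : ∀ v ∈ K, ⟪u, v - u⟫ - ⟪p, B (v - u)⟫ ≥ ⟪f_e, v - u⟫)
    (hEq : ∀ q : Q, -⟪B u, q⟫ - ⟪p, q⟫ = ⟪f_f, q⟫)
    (u_N : H) (p_M : Q) (huN : u_N ∈ K_N) (hpM : p_M ∈ W)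
    (hVIN : ∀ v_N ∈ K_N, ⟪u_N, v_N - u_N⟫ - ⟪p_M, B (v_N - u_N)⟫ ≥ ⟪f_e, v_N - u_N⟫)
    (hEqN : ∀ q ∈ W, -⟪B u_N, q⟫ - ⟪p_M, q⟫ = ⟪f_f, q⟫) :
    ∀ v ∈ K, ∀ v_N ∈ K_N, ∀ q_M ∈ W,
      ‖p - p_M‖ ^ 2 ≤ 126 * ‖u - v_N‖ ^ 2 + 39 * ‖p - q_M‖ ^ 2 +
        12 * ⟪D u - l, (v_N - u) + (v - u_N)⟫ :=
  stmt_15_general B hB K K_N W f_e f_f D l hD hl u p hVI hEq u_N p_M hpM hVIN hEqN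
end

section
/- Let (u,p) ∈ K × Q solve the continuous Biot contact problem and let (u_N, p_M) ∈ K_N × W solve the discrete Biot contact problem. Then ⟨p − p_M, q⟩_Q = −⟨B(u − u_N), q⟩_Q for all q ∈ W, and consequently ‖p − p_M‖_Q² ≤ 3‖u − u_N‖_H² + 3‖p − q_M‖_Q² for every q_M ∈ W. -/
open scoped RealInnerProductSpace

/- Subtracting the discrete pressure equation from the continuous one, tested with `q ∈ W`,
gives Galerkin orthogonality. Testing it with `q_M − p_M` and splitting
`p − p_M = (p − q_M) + (q_M − p_M)` yields `a² ≤ a c + β c + β a` for `a = ‖p − p_M‖`,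
`c = ‖p − q_M‖`, `β = ‖B(u − u_N)‖ ≤ ‖u − u_N‖`, and Young's inequality turns this into the
estimate. -/

section

variable {H Q : Type*} [NormedAddCommGroup H] [InnerProductSpace ℝ H]
  [NormedAddCommGroup Q] [InnerProductSpace ℝ Q]

theorem inner_sub_eq_neg_inner_map_sub_of_eq (B : H →L[ℝ] Q) {f : Q} {u u' : H} {p p' q : Q}
    (h : -⟪B u, q⟫ - ⟪p, q⟫ = ⟪f, q⟫) (h' : -⟪B u', q⟫ - ⟪p', q⟫ = ⟪f, q⟫) :
    ⟪p - p', q⟫ = -⟪B (u - u'), q⟫ := by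
  rw [inner_sub_left, map_sub, inner_sub_left]
  linarith

theorem sq_le_three_mul_sq_add_three_mul_sq {a b c : ℝ} (h : a ^ 2 ≤ a * c + b * c + b * a) :
    a ^ 2 ≤ 3 * b ^ 2 + 3 * c ^ 2 := by
  nlinarith [sq_nonneg (a - 2 * c), sq_nonneg (a - 2 * b), sq_nonneg (b - c)]

theorem norm_sub_sq_le_of_inner_eq_neg_inner (x y z b : Q)
    (h : ⟪x - y, z - y⟫ = -⟪b, z - y⟫) :
    ‖x - y‖ ^ 2 ≤ 3 * ‖b‖ ^ 2 + 3 * ‖x - z‖ ^ 2 := by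
  refine sq_le_three_mul_sq_add_three_mul_sq ?_
  have hsplit : ‖x - y‖ ^ 2 = ⟪x - y, x - z⟫ + ⟪x - y, z - y⟫ := by
    rw [← inner_add_right, sub_add_sub_cancel, real_inner_self_eq_norm_sq]
  have hxz : ⟪x - y, x - z⟫ ≤ ‖x - y‖ * ‖x - z‖ := real_inner_le_norm _ _
  have hb : -⟪b, z - y⟫ ≤ ‖b‖ * ‖z - y‖ := by
    rw [← inner_neg_left, ← norm_neg b]
    exact real_inner_le_norm _ _
  have hzy : ‖z - y‖ ≤ ‖x - z‖ + ‖x - y‖ := by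
    simpa only [norm_sub_rev x z] using norm_sub_le_norm_sub_add_norm_sub z x y
  nlinarith [mul_le_mul_of_nonneg_left hzy (norm_nonneg b)]

end

theorem stmt_16_general {H Q : Type*}
    [NormedAddCommGroup H] [InnerProductSpace ℝ H]
    [NormedAddCommGroup Q] [InnerProductSpace ℝ Q]
    (B : H →L[ℝ] Q) (hB : ‖B‖ ≤ 1)
    (W : Submodule ℝ Q)
    (f_f : Q)
    (u : H) (p : Q)
    (hEq : ∀ q : Q, -⟪B u, q⟫ - ⟪p, q⟫ = ⟪f_f, q⟫)
    (u_N : H) (p_M : Q) (hpM : p_M ∈ W)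
    (hEqN : ∀ q ∈ W, -⟪B u_N, q⟫ - ⟪p_M, q⟫ = ⟪f_f, q⟫) :
    (∀ q ∈ W, ⟪p - p_M, q⟫ = -⟪B (u - u_N), q⟫) ∧
    (∀ q_M ∈ W, ‖p - p_M‖ ^ 2 ≤ 3 * ‖u - u_N‖ ^ 2 + 3 * ‖p - q_M‖ ^ 2) := by
  have horth : ∀ q ∈ W, ⟪p - p_M, q⟫ = -⟪B (u - u_N), q⟫ := fun q hq ↦
    inner_sub_eq_neg_inner_map_sub_of_eq B (hEq q) (hEqN q hq)
  refine ⟨horth, fun q_M hqM ↦ ?_⟩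
  have hBe : ‖B (u - u_N)‖ ≤ ‖u - u_N‖ := by
    simpa only [one_mul] using B.le_of_opNorm_le hB (u - u_N)
  calc ‖p - p_M‖ ^ 2 ≤ 3 * ‖B (u - u_N)‖ ^ 2 + 3 * ‖p - q_M‖ ^ 2 :=
        norm_sub_sq_le_of_inner_eq_neg_inner p p_M q_M _ (horth _ (W.sub_mem hqM hpM))
    _ ≤ 3 * ‖u - u_N‖ ^ 2 + 3 * ‖p - q_M‖ ^ 2 := by gcongr

/-- Galerkin orthogonality for the pressure,
`⟨p − p_M, q⟩ = −⟨B(u − u_N), q⟩` for all `q ∈ W`, and the consequent estimate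
`‖p − p_M‖² ≤ 3‖u − u_N‖² + 3‖p − q_M‖²` for every `q_M ∈ W`. -/
theorem stmt_16 {H Q : Type*}
    [NormedAddCommGroup H] [InnerProductSpace ℝ H] [CompleteSpace H]
    [NormedAddCommGroup Q] [InnerProductSpace ℝ Q] [CompleteSpace Q]
    (B : H →L[ℝ] Q) (hB : ‖B‖ ≤ 1)
    (K : Set H) (hK_ne : K.Nonempty) (hK_cl : IsClosed K) (hK_cv : Convex ℝ K)
    (V_N : Submodule ℝ H) (hVN : FiniteDimensional ℝ V_N)
    (K_N : Set H) (hKN_sub : K_N ⊆ (V_N : Set H))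
    (hKN_ne : K_N.Nonempty) (hKN_cl : IsClosed K_N) (hKN_cv : Convex ℝ K_N)
    (W : Submodule ℝ Q) (hW : FiniteDimensional ℝ W)
    (f_e : H) (f_f : Q)
    (u : H) (p : Q) (hu : u ∈ K)
    (hVI : ∀ v ∈ K, ⟪u, v - u⟫ - ⟪p, B (v - u)⟫ ≥ ⟪f_e, v - u⟫)
    (hEq : ∀ q : Q, -⟪B u, q⟫ - ⟪p, q⟫ = ⟪f_f, q⟫)
    (u_N : H) (p_M : Q) (huN : u_N ∈ K_N) (hpM : p_M ∈ W)
    (hVIN : ∀ v_N ∈ K_N, ⟪u_N, v_N - u_N⟫ - ⟪p_M, B (v_N - u_N)⟫ ≥ ⟪f_e, v_N - u_N⟫)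
    (hEqN : ∀ q ∈ W, -⟪B u_N, q⟫ - ⟪p_M, q⟫ = ⟪f_f, q⟫) :
    (∀ q ∈ W, ⟪p - p_M, q⟫ = -⟪B (u - u_N), q⟫) ∧
    (∀ q_M ∈ W, ‖p - p_M‖ ^ 2 ≤ 3 * ‖u - u_N‖ ^ 2 + 3 * ‖p - q_M‖ ^ 2) :=
  stmt_16_general B hB W f_f u p hEq u_N p_M hpM hEqN
end
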